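/- arXiv:1410.8084 — 8 statements merged into one kernel-verified Lean document; each statement's English description precedes it below -/
import Mathlib

section
/- Let N be a positive integer, δ₀ > 0, and let A(t) be a real diagonal N×N matrix whose diagonal entries a_j(t) are C¹ functions on the interval I = (−1,1) satisfying a_j'(t) ≥ δ₀ for all j = 1,…,N and all t ∈ I. Let B(t) be a Hermitian N×N matrix depending C¹ on t ∈ I with ‖B'(t)‖ ≤ δ₀/2 (operator norm) for all t ∈ I. Then there is a numerical constant C (independent of N, δ₀, ε, A, B) such that for every ε > 0, the set of t ∈ I at which A(t)+B(t) fails to be invertible or satisfies ‖(A(t)+B(t))^{-1}‖ > 1/ε has Lebesgue measure at most C·N·ε/δ₀. -/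
/-!
Write `M(t) = A(t) + B(t)` and let `n(t)` be the number of eigenvalues of `M(t)` that are `≤ ε`.
Since `a_j' ≥ δ₀` and `‖B'‖ ≤ δ₀/2`, the quadratic form of `M(s)` dominates that of
`M(t) + (δ₀/2)(s - t)` for `t ≤ s`, so by a dimension count `n(s)` is at most the number of
eigenvalues of `M(t)` that are `≤ ε - (δ₀/2)(s - t)`. At a bad point `t` the matrix `M(t)` has an
eigenvalue in `[-ε, ε]`, hence `n(s) < n(t)` for bad points `t < s` with `s - t > 4ε/δ₀`.
So `n` takes values in `{1, …, N}` on the bad set and each of its level sets there has diameter at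
most `4ε/δ₀`, which bounds the measure of the bad set by `4Nε/δ₀`.
-/

open Set

/-- Operator norm of a complex `N×N` matrix with respect to the Euclidean norm on `ℂ^N`. -/
noncomputable def euclideanOpNorm {N : ℕ} (M : Matrix (Fin N) (Fin N) ℂ) : ℝ :=
  ‖Matrix.toEuclideanCLM (𝕜 := ℂ) M‖

open Module RCLike
open scoped InnerProductSpace ComplexConjugate

lemma OrthonormalBasis.norm_sq_eq_sum_repr {𝕜 E ι : Type*} [RCLike 𝕜] [NormedAddCommGroup E]
    [InnerProductSpace 𝕜 E] [Fintype ι] (b : OrthonormalBasis ι 𝕜 E) (v : E) :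
    ‖v‖ ^ 2 = ∑ i, ‖b.repr v i‖ ^ 2 := by
  simp_rw [b.repr_apply_apply, b.sum_sq_norm_inner_right]

namespace LinearMap.IsSymmetric

variable {𝕜 E : Type*} [RCLike 𝕜] [NormedAddCommGroup E] [InnerProductSpace 𝕜 E]
  [FiniteDimensional 𝕜 E] {T : E →ₗ[𝕜] E} (hT : T.IsSymmetric) {n : ℕ} (hn : finrank 𝕜 E = n)

lemma re_inner_apply_self_eq_sum (v : E) :
    re ⟪T v, v⟫_𝕜 = ∑ i, hT.eigenvalues hn i * ‖(hT.eigenvectorBasis hn).repr v i‖ ^ 2 := by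
  rw [← (hT.eigenvectorBasis hn).repr.inner_map_map, PiLp.inner_apply, map_sum]
  refine Finset.sum_congr rfl fun i _ => ?_
  rw [hT.eigenvectorBasis_apply_self_apply, ← smul_eq_mul, inner_smul_left, conj_ofReal,
    inner_self_eq_norm_sq_to_K, ← ofReal_pow, ← ofReal_mul, ofReal_re]

lemma norm_apply_sq_eq_sum (v : E) :
    ‖T v‖ ^ 2 = ∑ i, hT.eigenvalues hn i ^ 2 * ‖(hT.eigenvectorBasis hn).repr v i‖ ^ 2 := by
  rw [← (hT.eigenvectorBasis hn).repr.norm_map, EuclideanSpace.norm_sq_eq]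
  refine Finset.sum_congr rfl fun i _ => ?_
  rw [hT.eigenvectorBasis_apply_self_apply, norm_mul, norm_ofReal, mul_pow, sq_abs]

variable {hT hn}

lemma re_inner_apply_self_le {α : ℝ} {v : E}
    (h : ∀ i, (hT.eigenvectorBasis hn).repr v i ≠ 0 → hT.eigenvalues hn i ≤ α) :
    re ⟪T v, v⟫_𝕜 ≤ α * ‖v‖ ^ 2 := by
  rw [hT.re_inner_apply_self_eq_sum hn, (hT.eigenvectorBasis hn).norm_sq_eq_sum_repr,
    Finset.mul_sum]
  refine Finset.sum_le_sum fun i _ => ?_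
  by_cases hi : (hT.eigenvectorBasis hn).repr v i = 0
  · simp [hi]
  · exact mul_le_mul_of_nonneg_right (h i hi) (sq_nonneg _)

lemma lt_re_inner_apply_self {β : ℝ} {v : E} (hv : v ≠ 0)
    (h : ∀ i, (hT.eigenvectorBasis hn).repr v i ≠ 0 → β < hT.eigenvalues hn i) :
    β * ‖v‖ ^ 2 < re ⟪T v, v⟫_𝕜 := by
  obtain ⟨i, hi⟩ : ∃ i, (hT.eigenvectorBasis hn).repr v i ≠ 0 := by
    by_contra! h0
    exact hv ((hT.eigenvectorBasis hn).repr.map_eq_zero_iff.mp (by ext i; exact h0 i))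
  rw [hT.re_inner_apply_self_eq_sum hn, (hT.eigenvectorBasis hn).norm_sq_eq_sum_repr,
    Finset.mul_sum]
  refine Finset.sum_lt_sum (fun j _ => ?_)
    ⟨i, Finset.mem_univ _, mul_lt_mul_of_pos_right (h i hi) (by positivity)⟩
  by_cases hj : (hT.eigenvectorBasis hn).repr v j = 0
  · simp [hj]
  · exact mul_le_mul_of_nonneg_right (h j hj).le (sq_nonneg _)

variable (hT hn)

lemma exists_abs_eigenvalues_le {ε : ℝ} {v : E} (hv : ‖T v‖ < ε * ‖v‖) :
    ∃ i, |hT.eigenvalues hn i| ≤ ε := by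
  have hε : 0 < ε := pos_of_mul_pos_left ((norm_nonneg _).trans_lt hv) (norm_nonneg v)
  by_contra! h
  have : (ε * ‖v‖) ^ 2 ≤ ‖T v‖ ^ 2 := by
    rw [hT.norm_apply_sq_eq_sum hn, mul_pow, (hT.eigenvectorBasis hn).norm_sq_eq_sum_repr,
      Finset.mul_sum]
    refine Finset.sum_le_sum fun i _ => mul_le_mul_of_nonneg_right ?_ (sq_nonneg _)
    rw [← sq_abs (hT.eigenvalues hn i)]
    exact pow_le_pow_left₀ hε.le (h i).le 2
  exact (pow_lt_pow_left₀ hv (norm_nonneg _) two_ne_zero).not_ge this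

open Finset in
lemma card_eigenvalues_le_le_of_re_inner_add_le {S : E →ₗ[𝕜] E} (hS : S.IsSymmetric) {c : ℝ}
    (h : ∀ v, re ⟪S v, v⟫_𝕜 + c * ‖v‖ ^ 2 ≤ re ⟪T v, v⟫_𝕜) (α : ℝ) :
    #{i | hT.eigenvalues hn i ≤ α} ≤ #{i | hS.eigenvalues hn i ≤ α - c} := by
  by_contra! hlt
  -- A nonzero `v ∈ ker L` lies in the span of the eigenvectors of `T` with eigenvalue `≤ α` and in
  -- that of the eigenvectors of `S` with eigenvalue `> α - c`; such a `v` exists by counting.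
  let L : E →ₗ[𝕜]
      ({i // α < hT.eigenvalues hn i} → 𝕜) × ({i // hS.eigenvalues hn i ≤ α - c} → 𝕜) :=
    (LinearMap.pi fun i => (hT.eigenvectorBasis hn).toBasis.coord i.1).prod
      (LinearMap.pi fun i => (hS.eigenvectorBasis hn).toBasis.coord i.1)
  obtain ⟨v, hvL, hv⟩ := Submodule.exists_mem_ne_zero_of_ne_bot <|
    LinearMap.ker_ne_bot_of_finrank_lt (f := L) <| by
    simp only [finrank_prod, finrank_fintype_fun_eq_card, Fintype.card_subtype, hn]
    have := card_filter_add_card_filter_not (s := univ) (p := fun i => hT.eigenvalues hn i ≤ α)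
    simp only [not_le, card_univ, Fintype.card_fin] at this
    omega
  simp only [LinearMap.mem_ker, Prod.ext_iff, funext_iff, L] at hvL
  have hT_le : re ⟪T v, v⟫_𝕜 ≤ α * ‖v‖ ^ 2 := re_inner_apply_self_le fun i hi => by
    by_contra! hαi
    exact hi (by simpa using hvL.1 ⟨i, hαi⟩)
  have hS_gt : (α - c) * ‖v‖ ^ 2 < re ⟪S v, v⟫_𝕜 := lt_re_inner_apply_self hv fun i hi => by
    by_contra! hαi
    exact hi (by simpa using hvL.2 ⟨i, hαi⟩)
  linarith [h v]

end LinearMap.IsSymmetric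

namespace LinearMap

variable {𝕜 E : Type*} [RCLike 𝕜] [NormedAddCommGroup E] [InnerProductSpace 𝕜 E]
  [FiniteDimensional 𝕜 E] {S T : E →ₗ[𝕜] E}

open Finset

open scoped Classical in
/-- Eigenvalues are counted with multiplicity; the value is a junk `0` if `T` is not symmetric. -/
noncomputable def eigenvalueCount (T : E →ₗ[𝕜] E) (α : ℝ) : ℕ :=
  if hT : T.IsSymmetric then #{i | hT.eigenvalues rfl i ≤ α} else 0

lemma IsSymmetric.eigenvalueCount_eq (hT : T.IsSymmetric) (α : ℝ) :
    T.eigenvalueCount α = #{i | hT.eigenvalues rfl i ≤ α} := by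
  rw [eigenvalueCount, dif_pos hT]

lemma eigenvalueCount_le_finrank (T : E →ₗ[𝕜] E) (α : ℝ) :
    T.eigenvalueCount α ≤ finrank 𝕜 E := by
  unfold eigenvalueCount
  split_ifs
  · exact (card_filter_le _ _).trans (by simp)
  · exact Nat.zero_le _

lemma IsSymmetric.eigenvalueCount_le_of_re_inner_add_le (hT : T.IsSymmetric)
    (hS : S.IsSymmetric) {c : ℝ} (h : ∀ v, re ⟪S v, v⟫_𝕜 + c * ‖v‖ ^ 2 ≤ re ⟪T v, v⟫_𝕜) (α : ℝ) :
    T.eigenvalueCount α ≤ S.eigenvalueCount (α - c) := by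
  rw [hT.eigenvalueCount_eq, hS.eigenvalueCount_eq]
  exact hT.card_eigenvalues_le_le_of_re_inner_add_le rfl hS h α

lemma IsSymmetric.eigenvalueCount_lt_of_norm_apply_lt (hT : T.IsSymmetric) {ε β : ℝ} {v : E}
    (hv : ‖T v‖ < ε * ‖v‖) (hβ : β < -ε) :
    T.eigenvalueCount β < T.eigenvalueCount ε := by
  obtain ⟨i, hi⟩ := hT.exists_abs_eigenvalues_le rfl hv
  rw [abs_le] at hi
  rw [hT.eigenvalueCount_eq, hT.eigenvalueCount_eq]
  refine card_lt_card <| (Finset.ssubset_iff_of_subset ?_).mpr ⟨i, ?_, ?_⟩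
  · exact monotone_filter_right _ fun j _ hj => by linarith
  · simpa using hi.2
  · exact fun hiβ => by linarith [(mem_filter.1 hiβ).2]

end LinearMap

namespace Matrix

variable {𝕜 : Type*} [RCLike 𝕜] {n : Type*} [DecidableEq n]

lemma hasDerivAt_diagonal_add_apply {a a' : n → ℝ → ℝ} {B B' : ℝ → Matrix n n 𝕜} {t : ℝ}
    (ha : ∀ j, HasDerivAt (a j) (a' j t) t) (hB : ∀ i j, HasDerivAt (fun s => B s i j) (B' t i j) t)
    (i j : n) :
    HasDerivAt (fun s => (diagonal (fun k => (a k s : 𝕜)) + B s) i j)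
      ((diagonal (fun k => (a' k t : 𝕜)) + B' t) i j) t := by
  simp only [add_apply, diagonal_apply]
  refine HasDerivAt.add ?_ (hB i j)
  split_ifs with hij
  · exact (ofRealCLM (K := 𝕜)).hasFDerivAt.comp_hasDerivAt t (ha i)
  · exact hasDerivAt_const _ _

variable [Fintype n]

lemma re_inner_toEuclideanLin_eq_sum (A : Matrix n n 𝕜) (v : EuclideanSpace 𝕜 n) :
    re ⟪toEuclideanLin A v, v⟫_𝕜 = ∑ i, ∑ j, re (A i j * v j * conj (v i)) := by
  rw [← inner_re_symm, PiLp.inner_apply, map_sum]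
  refine Finset.sum_congr rfl fun i _ => ?_
  simp only [RCLike.inner_apply, toLpLin_apply, mulVec, dotProduct, Finset.sum_mul, map_sum]

lemma hasDerivAt_re_inner_toEuclideanLin {M M' : ℝ → Matrix n n 𝕜} {t : ℝ}
    (hM : ∀ i j, HasDerivAt (fun s => M s i j) (M' t i j) t) (v : EuclideanSpace 𝕜 n) :
    HasDerivAt (fun s => re ⟪toEuclideanLin (M s) v, v⟫_𝕜)
      (re ⟪toEuclideanLin (M' t) v, v⟫_𝕜) t := by
  simp_rw [re_inner_toEuclideanLin_eq_sum]
  refine HasDerivAt.fun_sum fun i _ => HasDerivAt.fun_sum fun j _ => ?_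
  exact reCLM.hasFDerivAt.comp_hasDerivAt t (((hM i j).mul_const _).mul_const _)


lemma re_inner_toEuclideanLin_add_mul_le {M M' : ℝ → Matrix n n 𝕜} {D : Set ℝ}
    (hD : Convex ℝ D)
    (hM : ∀ t ∈ D, ∀ i j, HasDerivAt (fun s => M s i j) (M' t i j) t) {c : ℝ}
    (hc : ∀ t ∈ D, ∀ v, c * ‖v‖ ^ 2 ≤ re ⟪toEuclideanLin (M' t) v, v⟫_𝕜)
    {t s : ℝ} (ht : t ∈ D) (hs : s ∈ D) (hts : t ≤ s) (v : EuclideanSpace 𝕜 n) :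
    re ⟪toEuclideanLin (M t) v, v⟫_𝕜 + c * (s - t) * ‖v‖ ^ 2 ≤
      re ⟪toEuclideanLin (M s) v, v⟫_𝕜 := by
  have hderiv := fun u (hu : u ∈ D) => hasDerivAt_re_inner_toEuclideanLin (hM u hu) v
  have := hD.mul_sub_le_image_sub_of_le_deriv (C := c * ‖v‖ ^ 2)
    (fun u hu => (hderiv u hu).continuousAt.continuousWithinAt)
    (fun u hu => (hderiv u (interior_subset hu)).differentiableAt.differentiableWithinAt)
    (fun u hu => (hderiv u (interior_subset hu)).deriv ▸ hc u (interior_subset hu) v) t ht s hs hts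
  linarith

lemma sub_norm_mul_le_re_inner_diagonal_add {d : n → ℝ} {δ : ℝ} (hd : ∀ j, δ ≤ d j)
    (B : Matrix n n 𝕜) (v : EuclideanSpace 𝕜 n) :
    (δ - ‖toEuclideanCLM (𝕜 := 𝕜) B‖) * ‖v‖ ^ 2 ≤
      re ⟪toEuclideanLin (diagonal (fun j => (d j : 𝕜)) + B) v, v⟫_𝕜 := by
  have hdiag : δ * ‖v‖ ^ 2 ≤ re ⟪toEuclideanLin (diagonal (fun j => (d j : 𝕜))) v, v⟫_𝕜 := by
    rw [re_inner_toEuclideanLin_eq_sum, EuclideanSpace.norm_sq_eq, Finset.mul_sum]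
    refine Finset.sum_le_sum fun i _ => ?_
    rw [Finset.sum_eq_single i (fun j _ hj => by simp [diagonal_apply_ne _ hj.symm]) (by simp)]
    simp only [diagonal_apply_eq, mul_assoc, RCLike.mul_conj, ← ofReal_pow, re_ofReal_mul,
      ofReal_re]
    exact mul_le_mul_of_nonneg_right (hd i) (sq_nonneg _)
  have hB : -(‖toEuclideanCLM (𝕜 := 𝕜) B‖ * ‖v‖ ^ 2) ≤ re ⟪toEuclideanLin B v, v⟫_𝕜 := by
    calc -(‖toEuclideanCLM (𝕜 := 𝕜) B‖ * ‖v‖ ^ 2)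
        ≤ -‖⟪toEuclideanCLM (𝕜 := 𝕜) B v, v⟫_𝕜‖ := by
          rw [sq, ← mul_assoc, neg_le_neg_iff]
          exact (norm_inner_le_norm _ _).trans
            (mul_le_mul_of_nonneg_right ((toEuclideanCLM (𝕜 := 𝕜) B).le_opNorm v) (norm_nonneg _))
      _ ≤ re ⟪toEuclideanLin B v, v⟫_𝕜 := neg_le_of_abs_le (abs_re_le_norm _)
  rw [map_add, LinearMap.add_apply, inner_add_left, map_add]
  linarith

lemma exists_norm_toEuclideanLin_lt {A : Matrix n n 𝕜} {ε : ℝ} (hε : 0 < ε)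
    (h : ¬ IsUnit A ∨ 1 / ε < ‖toEuclideanCLM (𝕜 := 𝕜) A⁻¹‖) :
    ∃ v, ‖toEuclideanLin A v‖ < ε * ‖v‖ := by
  by_cases hA : IsUnit A
  · obtain ⟨w, hw⟩ : ∃ w, 1 / ε * ‖w‖ < ‖toEuclideanCLM (𝕜 := 𝕜) A⁻¹ w‖ := by
      by_contra! hle
      exact (h.resolve_left (not_not_intro hA)).not_ge
        (ContinuousLinearMap.opNorm_le_bound _ (by positivity) hle)
    refine ⟨toEuclideanCLM (𝕜 := 𝕜) A⁻¹ w, ?_⟩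
    have hAA : toEuclideanLin A (toEuclideanCLM (𝕜 := 𝕜) A⁻¹ w) = w := by
      change (toEuclideanCLM (𝕜 := 𝕜) A * toEuclideanCLM (𝕜 := 𝕜) A⁻¹) w = w
      rw [← map_mul, mul_nonsing_inv A ((isUnit_iff_isUnit_det A).mp hA), map_one]
      rfl
    rw [hAA]
    rwa [one_div, inv_mul_eq_div, div_lt_iff₀' hε] at hw
  · obtain ⟨v, hv0, hv⟩ := exists_mulVec_eq_zero_iff.mpr
      (by rwa [isUnit_iff_isUnit_det, isUnit_iff_ne_zero, not_not] at hA)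
    refine ⟨WithLp.toLp 2 v, ?_⟩
    rw [toLpLin_toLp, toLin'_apply, hv, WithLp.toLp_zero, norm_zero]
    exact mul_pos hε (norm_pos_iff.mpr (by simpa using hv0))

end Matrix

open MeasureTheory in
lemma volume_le_card_mul_of_lt_of_lt_sub {S : Set ℝ} {f : ℝ → ℕ} {K : Finset ℕ} {d : ℝ}
    (hK : ∀ t ∈ S, f t ∈ K) (hf : ∀ t ∈ S, ∀ s ∈ S, t < s → d < s - t → f s < f t) :
    volume S ≤ K.card * ENNReal.ofReal d := by
  have hlevel : ∀ k, volume {t ∈ S | f t = k} ≤ ENNReal.ofReal d := fun k => by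
    have hgap : ∀ t ∈ {t ∈ S | f t = k}, ∀ s ∈ {t ∈ S | f t = k}, t < s →
        edist t s ≤ ENNReal.ofReal d := fun t ht s hs hts => by
      rw [edist_dist, Real.dist_eq, abs_sub_comm, abs_of_pos (sub_pos.2 hts)]
      exact ENNReal.ofReal_le_ofReal <|
        not_lt.1 fun hd => (hf t ht.1 s hs.1 hts hd).ne (hs.2.trans ht.2.symm)
    refine (Real.volume_le_diam _).trans (Metric.ediam_le fun t ht s hs => ?_)
    rcases lt_trichotomy t s with hts | rfl | hst
    · exact hgap t ht s hs hts
    · simp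
    · rw [edist_comm]
      exact hgap s hs t ht hst
  calc volume S ≤ volume (⋃ k ∈ K, {t ∈ S | f t = k}) :=
        measure_mono fun t ht => Set.mem_iUnion₂.2 ⟨f t, hK t ht, ht, rfl⟩
    _ ≤ ∑ k ∈ K, volume {t ∈ S | f t = k} := measure_biUnion_finset_le _ _
    _ ≤ K.card * ENNReal.ofReal d := by
        simpa using Finset.sum_le_sum fun k _ => hlevel k

/-- Lemma 5.2 of the paper: let `A(t)` be a real diagonal `N×N` matrix whose diagonal
entries `a_j` are `C¹` on `I = (−1,1)` with `a_j'(t) ≥ δ₀ > 0`, and let `B(t)` be a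
Hermitian `N×N` matrix, `C¹` in `t ∈ I`, with `‖B'(t)‖ ≤ δ₀/2`.  Then there is a
numerical constant `C` (independent of `N, δ₀, ε, A, B`) such that for every `ε > 0`
the set of `t ∈ I` where `A(t)+B(t)` is not invertible or `‖(A(t)+B(t))⁻¹‖ > 1/ε`
has Lebesgue measure at most `C N ε / δ₀`. -/
theorem stmt_0 :
    ∃ C : ℝ, 0 < C ∧
      ∀ (N : ℕ) (δ₀ : ℝ), 0 < δ₀ →
      ∀ (a a' : Fin N → ℝ → ℝ) (B B' : ℝ → Matrix (Fin N) (Fin N) ℂ),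
        (∀ j, ∀ t ∈ Ioo (-1 : ℝ) 1, HasDerivAt (a j) (a' j t) t) →
        (∀ j, ContinuousOn (a' j) (Ioo (-1 : ℝ) 1)) →
        (∀ j, ∀ t ∈ Ioo (-1 : ℝ) 1, δ₀ ≤ a' j t) →
        (∀ i j, ∀ t ∈ Ioo (-1 : ℝ) 1, HasDerivAt (fun s => B s i j) (B' t i j) t) →
        (∀ i j, ContinuousOn (fun t => B' t i j) (Ioo (-1 : ℝ) 1)) →
        (∀ t ∈ Ioo (-1 : ℝ) 1, (B t).IsHermitian) →
        (∀ t ∈ Ioo (-1 : ℝ) 1, euclideanOpNorm (B' t) ≤ δ₀ / 2) →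
        ∀ ε : ℝ, 0 < ε →
          MeasureTheory.volume
            {t ∈ Ioo (-1 : ℝ) 1 |
              ¬ IsUnit (Matrix.diagonal (fun j => ((a j t : ℝ) : ℂ)) + B t) ∨
              1 / ε < euclideanOpNorm ((Matrix.diagonal (fun j => ((a j t : ℝ) : ℂ)) + B t)⁻¹)}
            ≤ ENNReal.ofReal (C * N * ε / δ₀) := by
  refine ⟨4, by norm_num, fun N δ₀ hδ₀ a a' B B' ha _ ha' hB _ hBh hB' ε hε => ?_⟩
  unfold euclideanOpNorm at hB'
  set T : ℝ → EuclideanSpace ℂ (Fin N) →ₗ[ℂ] EuclideanSpace ℂ (Fin N) := fun t =>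
    Matrix.toEuclideanLin (Matrix.diagonal (fun j => ((a j t : ℝ) : ℂ)) + B t)
  have hT : ∀ t ∈ Ioo (-1 : ℝ) 1, (T t).IsSymmetric := fun t ht =>
    Matrix.isSymmetric_toEuclideanLin_iff.mpr <|
      (Matrix.isHermitian_diagonal_of_self_adjoint _
        (Pi.isSelfAdjoint.2 fun _ => RCLike.conj_ofReal _)).add (hBh t ht)
  have hgrowth : ∀ t ∈ Ioo (-1 : ℝ) 1, ∀ s ∈ Ioo (-1 : ℝ) 1, t ≤ s → ∀ v,
      re ⟪T t v, v⟫_ℂ + δ₀ / 2 * (s - t) * ‖v‖ ^ 2 ≤ re ⟪T s v, v⟫_ℂ :=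
    fun t ht s hs hts => Matrix.re_inner_toEuclideanLin_add_mul_le (convex_Ioo _ _)
      (fun u hu => Matrix.hasDerivAt_diagonal_add_apply (ha · u hu) (hB · · u hu))
      (fun u hu v => (mul_le_mul_of_nonneg_right (by linarith [hB' u hu]) (sq_nonneg _)).trans
        (Matrix.sub_norm_mul_le_re_inner_diagonal_add (ha' · u hu) _ v)) ht hs hts
  refine (volume_le_card_mul_of_lt_of_lt_sub (f := fun t => (T t).eigenvalueCount ε)
    (K := Finset.Icc 1 N) (d := 4 * ε / δ₀) (fun t ht => ?_)
    (fun t ht s hs hts hgap => ?_)).trans ?_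
  · obtain ⟨v, hv⟩ := Matrix.exists_norm_toEuclideanLin_lt hε ht.2
    have hpos := (hT t ht.1).eigenvalueCount_lt_of_norm_apply_lt hv (β := -2 * ε) (by linarith)
    have hle := (T t).eigenvalueCount_le_finrank ε
    rw [finrank_euclideanSpace_fin] at hle
    exact Finset.mem_Icc.2 ⟨by omega, hle⟩
  · obtain ⟨v, hv⟩ := Matrix.exists_norm_toEuclideanLin_lt hε ht.2
    have := (div_lt_iff₀ hδ₀).1 hgap
    calc (T s).eigenvalueCount ε ≤ (T t).eigenvalueCount (ε - δ₀ / 2 * (s - t)) :=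
          (hT s hs.1).eigenvalueCount_le_of_re_inner_add_le (hT t ht.1)
            (hgrowth t ht.1 s hs.1 hts.le) ε
      _ < (T t).eigenvalueCount ε :=
          (hT t ht.1).eigenvalueCount_lt_of_norm_apply_lt hv (by linarith)
  · rw [Nat.card_Icc, Nat.add_sub_cancel, ← ENNReal.ofReal_natCast,
      ← ENNReal.ofReal_mul (by positivity)]
    exact le_of_eq (congrArg _ (by ring))
end

section
/- For every real m > 0 and all integers j, k with 1 ≤ j ≤ k, setting λ_j = √(j(j+1)+m) and λ_k = √(k(k+1)+m), one has |(λ_k − λ_j) − (k − j)| ≤ (m+1)/j. -/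
lemma stmt_4_aux (m : ℝ) (hm : 0 < m) (j n : ℕ) (hj : 1 ≤ j) (hjn : j ≤ n) :
    |Real.sqrt ((n : ℝ) * ((n : ℝ) + 1) + m) - ((n : ℝ) + 1/2)| ≤ (m + 1) / (2 * j) := by
  have hxj : (j : ℝ) ≤ (n : ℝ) := by exact_mod_cast hjn
  have hj1 : (1 : ℝ) ≤ (j : ℝ) := by exact_mod_cast hj
  have hx1 : (1 : ℝ) ≤ (n : ℝ) := le_trans hj1 hxj
  have hs0 : (0:ℝ) < (n : ℝ) * ((n : ℝ) + 1) + m := by nlinarith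
  have hsq : Real.sqrt ((n : ℝ) * ((n : ℝ) + 1) + m) * Real.sqrt ((n : ℝ) * ((n : ℝ) + 1) + m)
      = (n : ℝ) * ((n : ℝ) + 1) + m := Real.mul_self_sqrt hs0.le
  have hxle : (n : ℝ) ≤ Real.sqrt ((n : ℝ) * ((n : ℝ) + 1) + m) := by
    have h2 : ((n:ℝ))^2 ≤ (n : ℝ) * ((n : ℝ) + 1) + m := by nlinarith
    nlinarith [Real.sqrt_le_sqrt h2, Real.sqrt_sq (show (0:ℝ) ≤ (n:ℝ) by linarith)] 
  set S := Real.sqrt ((n : ℝ) * ((n : ℝ) + 1) + m) with hS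
  have hd : 2 * (j : ℝ) ≤ S + ((n:ℝ) + 1/2) := by linarith
  have hdpos : 0 < S + ((n:ℝ) + 1/2) := by linarith
  have key : |S - ((n:ℝ) + 1/2)| * (S + ((n:ℝ) + 1/2)) = |m - 1/4| := by
    rw [← abs_of_pos hdpos, ← abs_mul]
    congr 1
    linear_combination hsq
  have h1 : |S - ((n:ℝ) + 1/2)| = |m - 1/4| / (S + ((n:ℝ) + 1/2)) := by
    rw [eq_div_iff hdpos.ne']
    exact key
  rw [h1]
  have hnum : |m - 1/4| ≤ m + 1 := by
    rcases abs_cases (m - 1/4) with ⟨h, _⟩ | ⟨h, _⟩ <;> linarith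
  exact div_le_div₀ (by linarith) hnum (by linarith) hd

/-- For every real `m > 0` and all integers `1 ≤ j ≤ k`, with `λ_j = √(j(j+1)+m)`,
`|(λ_k − λ_j) − (k − j)| ≤ (m+1)/j`. -/
theorem stmt_4 (m : ℝ) (hm : 0 < m) (j k : ℕ) (hj : 1 ≤ j) (hjk : j ≤ k) :
    |(Real.sqrt ((k : ℝ) * ((k : ℝ) + 1) + m) - Real.sqrt ((j : ℝ) * ((j : ℝ) + 1) + m))
        - ((k : ℝ) - (j : ℝ))| ≤ (m + 1) / (j : ℝ) := by
  have hk := stmt_4_aux m hm j k hj hjk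
  have hjj := stmt_4_aux m hm j j hj le_rfl
  have hj0 : (0:ℝ) < (j:ℝ) := by exact_mod_cast hj
  set P := Real.sqrt ((k : ℝ) * ((k : ℝ) + 1) + m) - ((k:ℝ) + 1/2) with hP
  set Q := Real.sqrt ((j : ℝ) * ((j : ℝ) + 1) + m) - ((j:ℝ) + 1/2) with hQ
  have heq : (Real.sqrt ((k : ℝ) * ((k : ℝ) + 1) + m) - Real.sqrt ((j : ℝ) * ((j : ℝ) + 1) + m))
        - ((k : ℝ) - (j : ℝ)) = P - Q := by rw [hP, hQ]; ring
  rw [heq]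
  calc |P - Q| ≤ |P| + |-Q| := by rw [sub_eq_add_neg]; exact abs_add_le _ _
    _ = |P| + |Q| := by rw [abs_neg]
    _ ≤ (m+1)/(2*j) + (m+1)/(2*j) := add_le_add hk hjj
    _ = (m+1)/j := by field_simp; ring
end

section
/- For every real β > 0 there exists a constant C depending only on β such that for all integers n, m ≥ 1, ∑_{k=1}^{∞} 1/(k^{2β}·(1 + |n − k|)·(1 + |m − k|)) ≤ C/(1 + |n − m|). -/
private lemma aux_Z {p : ℝ} (hp : 1 < p) :
    Summable (fun j : ℕ => 1 / ((j : ℝ) + 1) ^ p) := by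
  have h := (Real.summable_one_div_nat_rpow (p := p)).2 hp
  have h2 := (summable_nat_add_iff 1).2 h
  simpa [Nat.cast_add] using h2

private lemma aux_key {γ : ℝ} (hγ : 0 < γ) {K A : ℝ} (hK : 1 ≤ K) (hA : 1 ≤ A) :
    1 / (K ^ (2 * γ) * A) ≤ 1 / K ^ (1 + 2 * γ) + 1 / A ^ (1 + 2 * γ) := by
  have hK0 : (0:ℝ) < K := lt_of_lt_of_le one_pos hK
  have hA0 : (0:ℝ) < A := lt_of_lt_of_le one_pos hA
  rcases le_total A K with h | h
  · have h1 : A ^ (2*γ) ≤ K ^ (2*γ) := Real.rpow_le_rpow hA0.le h (by positivity)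
    have h2 : A ^ (1+2*γ) = A * A ^ (2*γ) := by
      rw [Real.rpow_add hA0, Real.rpow_one]
    have h3 : A ^ (1+2*γ) ≤ K ^ (2*γ) * A := by
      rw [h2, mul_comm]
      exact mul_le_mul_of_nonneg_right h1 hA0.le
    have := one_div_le_one_div_of_le (by positivity) h3
    refine le_trans this (le_add_of_nonneg_left (by positivity))
  · have h1 : K ^ (2*γ) ≤ A ^ (2*γ) := Real.rpow_le_rpow hK0.le h (by positivity)
    have h2 : K ^ (1+2*γ) = K * K ^ (2*γ) := by
      rw [Real.rpow_add hK0, Real.rpow_one]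
    have h3 : K ^ (1+2*γ) ≤ K ^ (2*γ) * A := by
      rw [h2, mul_comm]
      exact mul_le_mul_of_nonneg_left h (by positivity)
    have := one_div_le_one_div_of_le (by positivity) h3
    refine le_trans this (le_add_of_nonneg_right (by positivity))

private lemma aux_A {p : ℝ} (hp : 1 < p) (n : ℕ) :
    Summable (fun k : ℕ => 1 / (1 + |(n : ℝ) - ((k:ℝ) + 1)|) ^ p) ∧
    (∑' k : ℕ, 1 / (1 + |(n : ℝ) - ((k:ℝ) + 1)|) ^ p)
      ≤ 2 * ∑' j : ℕ, 1 / ((j : ℝ) + 1) ^ p := by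
  set f : ℕ → ℝ := fun k => 1 / (1 + |(n : ℝ) - ((k:ℝ) + 1)|) ^ p with hf
  have hfshift : ∀ k : ℕ, f (k + n) = 1 / ((k:ℝ) + 2) ^ p := by
    intro k
    have h1 : (1 + |(n : ℝ) - (((k + n : ℕ) : ℝ) + 1)|) = (k:ℝ) + 2 := by
      have h2 : (n : ℝ) - (((k + n : ℕ) : ℝ) + 1) = -((k:ℝ) + 1) := by push_cast; ring
      rw [h2, abs_neg, abs_of_nonneg (by positivity)]; ring
    simp only [hf, h1]
  have hshift_summable : Summable (fun k : ℕ => 1 / ((k:ℝ) + 2) ^ p) := by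
    apply Summable.of_nonneg_of_le (fun k => by positivity) (fun k => ?_) (aux_Z hp)
    exact one_div_le_one_div_of_le (by positivity)
      (Real.rpow_le_rpow (by positivity) (by linarith) (by linarith))
  have hsumf : Summable f := by
    refine (summable_nat_add_iff n).1 ?_
    simpa only [hfshift] using hshift_summable
  refine ⟨hsumf, ?_⟩
  have hsplit := Summable.sum_add_tsum_nat_add n hsumf
  have hfin : ∑ i ∈ Finset.range n, f i ≤ ∑' j : ℕ, 1 / ((j : ℝ) + 1) ^ p := by
    have hre : ∑ i ∈ Finset.range n, f i
        = ∑ i ∈ Finset.range n, 1 / ((i:ℝ) + 1) ^ p := by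
      rw [← Finset.sum_range_reflect (fun i => 1 / ((i:ℝ) + 1) ^ p) n]
      apply Finset.sum_congr rfl
      intro i hi
      have hi' : i < n := Finset.mem_range.1 hi
      have hn1 : 1 ≤ n := by omega
      have hcast : ((n - 1 - i : ℕ) : ℝ) = (n:ℝ) - 1 - (i:ℝ) := by
        rw [Nat.cast_sub (by omega), Nat.cast_sub hn1]; push_cast; ring
      have h1 : (1 + |(n : ℝ) - ((i:ℝ) + 1)|) = ((n - 1 - i : ℕ) : ℝ) + 1 := by
        have hge : (0:ℝ) ≤ (n : ℝ) - ((i:ℝ) + 1) := by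
          have : (i:ℝ) + 1 ≤ (n:ℝ) := by exact_mod_cast hi'
          linarith
        rw [abs_of_nonneg hge, hcast]; ring
      simp only [hf, h1]
    rw [hre]
    exact Summable.sum_le_tsum _ (fun j _ => by positivity) (aux_Z hp)
  have htail : (∑' i : ℕ, f (i + n)) ≤ ∑' j : ℕ, 1 / ((j : ℝ) + 1) ^ p := by
    rw [tsum_congr hfshift]
    refine Summable.tsum_le_tsum (fun k => ?_) hshift_summable (aux_Z hp)
    exact one_div_le_one_div_of_le (by positivity)
      (Real.rpow_le_rpow (by positivity) (by linarith) (by linarith))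
  linarith [hsplit]

/-- For every `β > 0` there is a constant `C` (depending only on `β`) such that for all
integers `n, m ≥ 1`, `∑_{k=1}^∞ 1/(k^{2β}(1+|n−k|)(1+|m−k|)) ≤ C/(1+|n−m|)`. -/
theorem stmt_8 (β : ℝ) (hβ : 0 < β) :
    ∃ C : ℝ, ∀ n m : ℕ, 1 ≤ n → 1 ≤ m →
      Summable (fun k : ℕ =>
        1 / (((k : ℝ) + 1) ^ (2 * β) * (1 + |(n : ℝ) - ((k : ℝ) + 1)|)
          * (1 + |(m : ℝ) - ((k : ℝ) + 1)|))) ∧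
      (∑' k : ℕ, 1 / (((k : ℝ) + 1) ^ (2 * β) * (1 + |(n : ℝ) - ((k : ℝ) + 1)|)
          * (1 + |(m : ℝ) - ((k : ℝ) + 1)|))) ≤ C / (1 + |(n : ℝ) - (m : ℝ)|) := by
  have hγ0 : 0 < min β 1 := lt_min hβ one_pos
  set γ : ℝ := min β 1 with hγdef
  have hγβ : γ ≤ β := min_le_left _ _
  set p : ℝ := 1 + 2 * γ with hpdef
  have hp : 1 < p := by rw [hpdef]; linarith
  set Z : ℝ := ∑' j : ℕ, 1 / ((j : ℝ) + 1) ^ p with hZdef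
  have hZ0 : 0 ≤ Z := tsum_nonneg (fun j => by positivity)
  refine ⟨12 * Z, fun n m hn hm => ?_⟩
  set D : ℝ := 1 + |(n:ℝ) - (m:ℝ)| with hDdef
  have hD1 : (1:ℝ) ≤ D := le_add_of_nonneg_right (abs_nonneg _)
  have hD0 : (0:ℝ) < D := lt_of_lt_of_le one_pos hD1
  set T : ℕ → ℝ := fun k =>
    1 / (((k : ℝ) + 1) ^ (2 * β) * (1 + |(n : ℝ) - ((k : ℝ) + 1)|)
      * (1 + |(m : ℝ) - ((k : ℝ) + 1)|)) with hTdef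
  set g : ℕ → ℝ := fun k => 2 / D * (2 * (1 / ((k:ℝ) + 1) ^ p)
      + 1 / (1 + |(n:ℝ) - ((k:ℝ) + 1)|) ^ p
      + 1 / (1 + |(m:ℝ) - ((k:ℝ) + 1)|) ^ p) with hgdef
  have hkey : ∀ k : ℕ, T k ≤ g k := by
    intro k
    set K : ℝ := (k:ℝ) + 1 with hKdef
    have hK1 : (1:ℝ) ≤ K := le_add_of_nonneg_left (Nat.cast_nonneg k)
    have hK0 : (0:ℝ) < K := lt_of_lt_of_le one_pos hK1
    set A : ℝ := 1 + |(n:ℝ) - K| with hAdef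
    set B : ℝ := 1 + |(m:ℝ) - K| with hBdef
    have hA1 : (1:ℝ) ≤ A := le_add_of_nonneg_right (abs_nonneg _)
    have hB1 : (1:ℝ) ≤ B := le_add_of_nonneg_right (abs_nonneg _)
    have hA0 : (0:ℝ) < A := lt_of_lt_of_le one_pos hA1
    have hB0 : (0:ℝ) < B := lt_of_lt_of_le one_pos hB1
    have hmono : T k ≤ 1 / (K ^ (2*γ) * A * B) := by
      apply one_div_le_one_div_of_le (by positivity)
      have hKe : K ^ (2*γ) ≤ K ^ (2*β) :=
        Real.rpow_le_rpow_of_exponent_le hK1 (by linarith)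
      have := mul_le_mul_of_nonneg_right hKe hA0.le
      exact mul_le_mul_of_nonneg_right this hB0.le
    have hDAB : D ≤ A + B := by
      have habs : |(n:ℝ) - (m:ℝ)| ≤ |(n:ℝ) - K| + |(m:ℝ) - K| := by
        have h1 := abs_sub_le ((n:ℝ)) K ((m:ℝ))
        rw [abs_sub_comm K ((m:ℝ))] at h1
        exact h1
      rw [hDdef, hAdef, hBdef]; linarith
    have hstep2 : 1 / (A * B) ≤ 2 / D * (1 / A + 1 / B) := by
      have hid : 2 / D * (1 / A + 1 / B) - 1 / (A * B)
          = (2 * (A + B) - D) / (D * (A * B)) := by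
        field_simp
        ring
      have hnum : (0:ℝ) ≤ 2 * (A + B) - D := by linarith
      have hyy : (0:ℝ) ≤ (2 * (A + B) - D) / (D * (A * B)) :=
        div_nonneg hnum (by positivity)
      linarith [hid ▸ hyy]
    have hcomb : 1 / (K ^ (2*γ) * A * B)
        ≤ 2 / D * (1 / (K ^ (2*γ) * A) + 1 / (K ^ (2*γ) * B)) := by
      have hu0 : (0:ℝ) < K ^ (2*γ) := by positivity
      calc 1 / (K ^ (2*γ) * A * B) = (1 / K ^ (2*γ)) * (1 / (A * B)) := by
            rw [mul_assoc, ← one_div_mul_one_div]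
        _ ≤ (1 / K ^ (2*γ)) * (2 / D * (1 / A + 1 / B)) :=
            mul_le_mul_of_nonneg_left hstep2 (by positivity)
        _ = 2 / D * (1 / K ^ (2*γ) * (1 / A) + 1 / K ^ (2*γ) * (1 / B)) := by ring
        _ = 2 / D * (1 / (K ^ (2*γ) * A) + 1 / (K ^ (2*γ) * B)) := by
            rw [one_div_mul_one_div, one_div_mul_one_div]
    have hsplitA : 1 / (K ^ (2*γ) * A) ≤ 1 / K ^ p + 1 / A ^ p := by
      rw [hpdef]; exact aux_key hγ0 hK1 hA1
    have hsplitB : 1 / (K ^ (2*γ) * B) ≤ 1 / K ^ p + 1 / B ^ p := by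
      rw [hpdef]; exact aux_key hγ0 hK1 hB1
    have hlast : 2 / D * (1 / (K ^ (2*γ) * A) + 1 / (K ^ (2*γ) * B)) ≤ g k := by
      have h2D : (0:ℝ) ≤ 2 / D := by positivity
      have := add_le_add hsplitA hsplitB
      have h3 := mul_le_mul_of_nonneg_left this h2D
      calc 2 / D * (1 / (K ^ (2*γ) * A) + 1 / (K ^ (2*γ) * B))
          ≤ 2 / D * ((1 / K ^ p + 1 / A ^ p) + (1 / K ^ p + 1 / B ^ p)) := h3
        _ = g k := by rw [hgdef]; ring
    exact le_trans (le_trans hmono hcomb) hlast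
  have hT0 : ∀ k, 0 ≤ T k := fun k => by positivity
  have hsZ : Summable (fun k : ℕ => 1 / ((k:ℝ) + 1) ^ p) := aux_Z hp
  have hsAn := aux_A hp n
  have hsAm := aux_A hp m
  have hsg : Summable g :=
    (((hsZ.mul_left 2).add hsAn.1).add hsAm.1).mul_left (2 / D)
  have hsT : Summable T := Summable.of_nonneg_of_le hT0 hkey hsg
  refine ⟨hsT, ?_⟩
  have h1 : (∑' k, T k) ≤ ∑' k, g k := Summable.tsum_le_tsum hkey hsT hsg
  have h2 : (∑' k, g k) = 2 / D * (2 * Z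
      + (∑' k : ℕ, 1 / (1 + |(n:ℝ) - ((k:ℝ) + 1)|) ^ p)
      + (∑' k : ℕ, 1 / (1 + |(m:ℝ) - ((k:ℝ) + 1)|) ^ p)) := by
    rw [hgdef]
    rw [tsum_mul_left]
    rw [Summable.tsum_add ((hsZ.mul_left 2).add hsAn.1) hsAm.1]
    rw [Summable.tsum_add (hsZ.mul_left 2) hsAn.1]
    rw [tsum_mul_left]
  have h3 : (∑' k, g k) ≤ 12 * Z / D := by
    rw [h2]
    have hb : 2 * Z + (∑' k : ℕ, 1 / (1 + |(n:ℝ) - ((k:ℝ) + 1)|) ^ p)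
        + (∑' k : ℕ, 1 / (1 + |(m:ℝ) - ((k:ℝ) + 1)|) ^ p) ≤ 6 * Z := by
      linarith [hsAn.2, hsAm.2]
    calc 2 / D * (2 * Z
        + (∑' k : ℕ, 1 / (1 + |(n:ℝ) - ((k:ℝ) + 1)|) ^ p)
        + (∑' k : ℕ, 1 / (1 + |(m:ℝ) - ((k:ℝ) + 1)|) ^ p))
        ≤ 2 / D * (6 * Z) := mul_le_mul_of_nonneg_left hb (by positivity)
      _ = 12 * Z / D := by ring
  linarith
end

section
/- For all reals s ≥ 1 and β > 0 there exists a constant C depending only on s and β such that for every integer n ≥ 1, ∑_{j=1}^{∞} 1/((1 + |n − j|)·j^{s+β}) ≤ C/n. -/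
/-!
Put `p = s + β > 1`, `a = 1 + |n - j|` and `b = j`. Since `n ≤ a + b`,
`n / (a b^p) ≤ 1 / b^p + 1 / (a b^(p-1))`, and `a b^(p-1) ≥ min(a, b)^p` because `p ≥ 1`;
hence `n` times the `j`-th summand is at most `a^(-p) + 2 b^(-p)`. Both terms are values of the
weight `(1 + |k|)^(-p)` on `ℤ`, at the injectively indexed points `k = n - j` and `k = j`, so their
sums over `j` are bounded by the sum of the weight over `ℤ`, which does not depend on `n`.
-/

open Real Function

lemma div_mul_rpow_le_one_div_rpow_add_one_div_rpow {a b p : ℝ} (ha : 0 < a) (hb : 0 < b)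
    (hp : 1 ≤ p) : b / (a * b ^ p) ≤ 1 / a ^ p + 1 / b ^ p := by
  rcases le_total a b with hab | hba
  · calc b / (a * b ^ p) = 1 / (a * b ^ (p - 1)) := by
          rw [rpow_sub_one hb.ne']; field_simp
      _ ≤ 1 / (a * a ^ (p - 1)) := by gcongr
      _ = 1 / a ^ p := by rw [rpow_sub_one ha.ne', mul_div_cancel₀ _ ha.ne']
      _ ≤ 1 / a ^ p + 1 / b ^ p := le_add_of_nonneg_right (by positivity)
  · calc b / (a * b ^ p) ≤ b / (b * b ^ p) := by gcongr
      _ = 1 / b ^ p := by field_simp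
      _ ≤ 1 / a ^ p + 1 / b ^ p := le_add_of_nonneg_left (by positivity)

lemma div_one_add_abs_sub_mul_rpow_le {x y p : ℝ} (hy : 0 < y) (hp : 1 ≤ p) :
    x / ((1 + |x - y|) * y ^ p) ≤ 1 / (1 + |x - y|) ^ p + 2 / y ^ p := by
  set a := 1 + |x - y|
  have ha : 0 < a := by positivity
  have hxa : x ≤ a + y := by linarith [le_abs_self (x - y)]
  calc x / (a * y ^ p) ≤ (a + y) / (a * y ^ p) := by gcongr
    _ = 1 / y ^ p + y / (a * y ^ p) := by field_simp
    _ ≤ 1 / y ^ p + (1 / a ^ p + 1 / y ^ p) := by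
        gcongr; exact div_mul_rpow_le_one_div_rpow_add_one_div_rpow ha hy hp
    _ = 1 / a ^ p + 2 / y ^ p := by ring

noncomputable def weight (p : ℝ) (k : ℤ) : ℝ := 1 / (1 + |(k : ℝ)|) ^ p

lemma weight_nonneg (p : ℝ) (k : ℤ) : 0 ≤ weight p k := by
  unfold weight; positivity

lemma summable_weight {p : ℝ} (hp : 1 < p) : Summable (weight p) := by
  have hnat : Summable fun n : ℕ => weight p n := by
    refine ((summable_one_div_nat_add_rpow 1 p).2 hp).congr fun n => ?_
    rw [weight, Int.cast_natCast, abs_of_nonneg (by positivity), abs_of_nonneg (by positivity),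
      add_comm]
  exact .of_nat_of_neg hnat (by simpa [weight] using hnat)

lemma one_div_one_add_abs_mul_rpow_le_weight {p : ℝ} (hp : 1 ≤ p) {n : ℕ} (hn : 1 ≤ n) (j : ℕ) :
    1 / ((1 + |(n : ℝ) - ((j : ℝ) + 1)|) * ((j : ℝ) + 1) ^ p) ≤
      (weight p (n - (j + 1)) + 2 * weight p j) / n := by
  have hw_reflect : weight p (n - (j + 1)) = 1 / (1 + |(n : ℝ) - ((j : ℝ) + 1)|) ^ p := by
    simp [weight]
  have hw_cast : weight p j = 1 / ((j : ℝ) + 1) ^ p := by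
    simp [weight, add_comm]
  rw [le_div_iff₀ (by exact_mod_cast hn), mul_comm, hw_reflect, hw_cast]
  simp only [mul_one_div]
  exact div_one_add_abs_sub_mul_rpow_le (x := n) (by positivity) hp

/-- For all `s ≥ 1` and `β > 0` there is a constant `C` (depending only on `s` and `β`)
such that for every integer `n ≥ 1`, `∑_{j=1}^∞ 1/((1+|n−j|) j^{s+β}) ≤ C/n`. -/
theorem stmt_9 (s β : ℝ) (hs : 1 ≤ s) (hβ : 0 < β) :
    ∃ C : ℝ, ∀ n : ℕ, 1 ≤ n →
      Summable (fun j : ℕ =>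
        1 / ((1 + |(n : ℝ) - ((j : ℝ) + 1)|) * ((j : ℝ) + 1) ^ (s + β))) ∧
      (∑' j : ℕ, 1 / ((1 + |(n : ℝ) - ((j : ℝ) + 1)|) * ((j : ℝ) + 1) ^ (s + β))) ≤
        C / (n : ℝ) := by
  have hp : 1 < s + β := by linarith
  have hw := summable_weight hp
  refine ⟨3 * ∑' k, weight (s + β) k, fun n hn => ?_⟩
  have hreflect : Injective fun j : ℕ => (n : ℤ) - (j + 1) := fun i j h => by
    simp only at h; omega
  have hcast : Injective ((↑) : ℕ → ℤ) := Nat.cast_injective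
  have hw_reflect : Summable fun j : ℕ => weight (s + β) (n - (j + 1)) := hw.comp_injective hreflect
  have hw_cast : Summable fun j : ℕ => weight (s + β) j := hw.comp_injective hcast
  have hmaj := one_div_one_add_abs_mul_rpow_le_weight hp.le hn
  have hM := (hw_reflect.add (hw_cast.mul_left 2)).div_const (n : ℝ)
  have hsum := Summable.of_nonneg_of_le (fun j => by positivity) hmaj hM
  refine ⟨hsum, (hsum.tsum_le_tsum hmaj hM).trans ?_⟩
  rw [tsum_div_const, hw_reflect.tsum_add (hw_cast.mul_left 2), tsum_mul_left]
  gcongr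
  have hreflect_le := tsum_comp_le_tsum_of_inj hw (weight_nonneg _) hreflect
  have hcast_le := tsum_comp_le_tsum_of_inj hw (weight_nonneg _) hcast
  simp only [comp_def] at hreflect_le hcast_le
  linarith
end

section
/- Let C ≥ 1, n ≥ 1 be fixed and let σ₀, μ₀ ∈ (0,1]. Let (ε_j)_{j≥0} be a sequence of reals in (0,1) with ε₁ ≤ ε₀^{7/6} and such that for all j ≥ 1, ε_{j+1} ≤ C·( (1/2)·ε_j·(j+1)^{2n}·σ₀^{−n} + (ε_j/ε_{j−1})^{6/5} + (j+1)^{2(n+1)}·σ₀^{−n−1}·μ₀^{−2}·ε_j^{1/5 − 1/32} )·ε_j. Then there exists ε* > 0, depending only on C, n, σ₀ and μ₀, such that if ε₀ ≤ ε* then ε_j ≤ ε₀^{(7/6)^j} for all j ≥ 1. -/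
/-!
Each of the three terms of the recursion is at most `P_j ε_j^{1/480} ε_j^{1/6}` with
`P_j = (j+1)^{2(n+1)} / (σ₀^{n+1} μ₀²)`; for the ratio term this uses the previous step
`ε_j ≤ ε_{j-1}^{7/6}`. Hence `ε_{j+1} ≤ ε_j^{7/6}` as soon as `3 C P_j ε_j^{1/480} ≤ 1`.
Along the super-exponential bound `ε_j ≤ ε₀^{(7/6)^j}` the factor `ε_j^{1/480}` beats the
polynomial growth of `P_j` uniformly in `j` once `ε₀` is small, so both bounds propagate by
induction.
-/

open Real

theorem exists_pos_pow_mul_rpow_pow_le (m : ℕ) {q p D : ℝ} (hq : 1 < q) (hp : 0 < p)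
    (hD : 0 < D) :
    ∃ δ > 0, ∀ x, 0 ≤ x → x ≤ δ → ∀ j : ℕ, ((j : ℝ) + 1) ^ m * (x ^ q ^ j) ^ p ≤ D := by
  set M := max 0 (-log D)
  -- chosen so that `K p (1 + j (q - 1)) ≥ M + m j`, using Bernoulli's `q ^ j ≥ 1 + j (q - 1)`
  set K := (m / (q - 1) + M) / p
  refine ⟨exp (-K), exp_pos _, fun x hx0 hxδ j => ?_⟩
  have hdecay : (x ^ q ^ j) ^ p ≤ exp (-(K * p) * q ^ j) :=
    calc (x ^ q ^ j) ^ p ≤ (exp (-K) ^ q ^ j) ^ p := by gcongr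
      _ = exp (-(K * p) * q ^ j) := by rw [← exp_mul, ← exp_mul]; ring_nf
  have hgrowth : ((j : ℝ) + 1) ^ m ≤ exp (m * j) := by
    rw [exp_nat_mul]
    gcongr
    linarith [add_one_le_exp (j : ℝ)]
  have hBernoulli : 1 + j * (q - 1) ≤ q ^ j := by
    simpa using one_add_mul_le_pow (by linarith : (-2 : ℝ) ≤ q - 1) j
  have hq1 : 0 < q - 1 := sub_pos.mpr hq
  have hKp : K * p = m / (q - 1) + M := by simp only [K]; field_simp
  have hM : 0 ≤ M := le_max_left _ _
  have hexponent : m * j - K * p * q ^ j ≤ log D :=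
    calc m * j - K * p * q ^ j ≤ m * j - K * p * (1 + j * (q - 1)) := by
          gcongr
      _ = -M - m / (q - 1) - M * j * (q - 1) := by rw [hKp]; field_simp; ring
      _ ≤ -M := by
          have : 0 ≤ M * j * (q - 1) := by positivity
          linarith [div_nonneg (Nat.cast_nonneg m) hq1.le]
      _ ≤ log D := neg_le.mp (le_max_right _ _)
  calc ((j : ℝ) + 1) ^ m * (x ^ q ^ j) ^ p ≤ exp (m * j) * exp (-(K * p) * q ^ j) := by
        gcongr
    _ = exp (m * j - K * p * q ^ j) := by rw [← exp_add]; ring_nf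
    _ ≤ exp (log D) := exp_le_exp.mpr hexponent
    _ = D := exp_log hD

namespace KAMError

variable {n : ℕ} {x y b σ μ : ℝ}

theorem first_term_le (hx : 0 < x) (hx1 : x ≤ 1) (hb : 1 ≤ b) (hσ : 0 < σ) (hσ1 : σ ≤ 1)
    (hμ : 0 < μ) (hμ1 : μ ≤ 1) :
    1 / 2 * x * b ^ (2 * n) / σ ^ n
      ≤ b ^ (2 * (n + 1)) / (σ ^ (n + 1) * μ ^ 2) * x ^ (1 / 480 : ℝ) * x ^ (1 / 6 : ℝ) := by
  have hsplit : x = x ^ (5 / 6 : ℝ) * x ^ (1 / 6 : ℝ) := by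
    rw [← rpow_add hx]; norm_num
  have hden : σ ^ (n + 1) * μ ^ 2 ≤ σ ^ n :=
    (mul_le_of_le_one_right (by positivity) (pow_le_one₀ hμ.le hμ1)).trans
      (pow_le_pow_of_le_one hσ.le hσ1 (Nat.le_succ n))
  have hnum : 1 / 2 * x ^ (5 / 6 : ℝ) * b ^ (2 * n) ≤ 1 * x ^ (1 / 480 : ℝ) * b ^ (2 * (n + 1)) :=
    mul_le_mul (mul_le_mul (by norm_num) (rpow_le_rpow_of_exponent_ge hx hx1 (by norm_num))
      (by positivity) zero_le_one) (pow_le_pow_right₀ hb (by omega)) (by positivity)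
      (by positivity)
  calc 1 / 2 * x * b ^ (2 * n) / σ ^ n
      = 1 / 2 * x ^ (5 / 6 : ℝ) * b ^ (2 * n) / σ ^ n * x ^ (1 / 6 : ℝ) := by
        nth_rewrite 1 [hsplit]; ring
    _ ≤ 1 * x ^ (1 / 480 : ℝ) * b ^ (2 * (n + 1)) / (σ ^ (n + 1) * μ ^ 2) * x ^ (1 / 6 : ℝ) := by
        gcongr ?_ * _
        exact div_le_div₀ (by positivity) hnum (by positivity) hden
    _ = _ := by ring

theorem second_term_le (hx : 0 < x) (hx1 : x ≤ 1) (hy : 0 < y) (hxy : x ≤ y ^ (7 / 6 : ℝ)) :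
    (x / y) ^ (6 / 5 : ℝ) ≤ x ^ (1 / 480 : ℝ) * x ^ (1 / 6 : ℝ) := by
  have hy_ge : x ^ (6 / 7 : ℝ) ≤ y :=
    calc x ^ (6 / 7 : ℝ) ≤ (y ^ (7 / 6 : ℝ)) ^ (6 / 7 : ℝ) := by gcongr
      _ = y := by rw [← rpow_mul hy.le]; norm_num
  have hratio : x / y ≤ x ^ (1 / 7 : ℝ) :=
    calc x / y ≤ x / x ^ (6 / 7 : ℝ) := div_le_div_of_nonneg_left hx.le (by positivity) hy_ge
      _ = x ^ (1 / 7 : ℝ) := by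
        rw [show (1 / 7 : ℝ) = 1 - 6 / 7 by norm_num, rpow_sub hx, rpow_one]
  calc (x / y) ^ (6 / 5 : ℝ) ≤ (x ^ (1 / 7 : ℝ)) ^ (6 / 5 : ℝ) := by gcongr
    _ = x ^ (1 / 210 : ℝ) * x ^ (1 / 6 : ℝ) := by
        rw [← rpow_mul hx.le, ← rpow_add hx]; norm_num
    _ ≤ x ^ (1 / 480 : ℝ) * x ^ (1 / 6 : ℝ) :=
        mul_le_mul_of_nonneg_right (rpow_le_rpow_of_exponent_ge hx hx1 (by norm_num))
          (by positivity)

theorem third_term_eq (hx : 0 < x) (A : ℝ) :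
    A * x ^ ((1 : ℝ) / 5 - 1 / 32) = A * x ^ (1 / 480 : ℝ) * x ^ (1 / 6 : ℝ) := by
  rw [mul_assoc, ← rpow_add hx]; norm_num

/-- Here `x' = ε_{j+1}`, `x = ε_j`, `y = ε_{j-1}` and `b = j + 1`. -/
theorem step_le {x' C : ℝ} (hC : 0 < C) (hx : 0 < x) (hx1 : x ≤ 1) (hy : 0 < y)
    (hb : 1 ≤ b) (hσ : 0 < σ) (hσ1 : σ ≤ 1) (hμ : 0 < μ) (hμ1 : μ ≤ 1)
    (hxy : x ≤ y ^ (7 / 6 : ℝ))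
    (hsmall : b ^ (2 * (n + 1)) * x ^ (1 / 480 : ℝ) ≤ σ ^ (n + 1) * μ ^ 2 / (3 * C))
    (hrec : x' ≤ C * (1 / 2 * x * b ^ (2 * n) / σ ^ n + (x / y) ^ (6 / 5 : ℝ)
      + b ^ (2 * (n + 1)) / (σ ^ (n + 1) * μ ^ 2) * x ^ ((1 : ℝ) / 5 - 1 / 32)) * x) :
    x' ≤ x ^ (7 / 6 : ℝ) := by
  set P := b ^ (2 * (n + 1)) / (σ ^ (n + 1) * μ ^ 2)
  have hA : 0 < σ ^ (n + 1) * μ ^ 2 := by positivity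
  have hP : 1 ≤ P := by
    rw [le_div_iff₀ hA, one_mul]
    calc σ ^ (n + 1) * μ ^ 2 ≤ 1 * 1 := by
          gcongr <;> exact pow_le_one₀ (by positivity) ‹_›
      _ ≤ b ^ (2 * (n + 1)) := by rw [one_mul]; exact one_le_pow₀ hb
  have hPsmall : 3 * C * (P * x ^ (1 / 480 : ℝ)) ≤ 1 := by
    rw [← le_div_iff₀' (by positivity), div_mul_eq_mul_div, div_le_div_iff₀ hA (by positivity)]
    calc b ^ (2 * (n + 1)) * x ^ (1 / 480 : ℝ) * (3 * C)
        ≤ σ ^ (n + 1) * μ ^ 2 / (3 * C) * (3 * C) := by gcongr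
      _ = 1 * (σ ^ (n + 1) * μ ^ 2) := by field_simp
  have h1 := first_term_le (n := n) hx hx1 hb hσ hσ1 hμ hμ1
  have h2 : (x / y) ^ (6 / 5 : ℝ) ≤ P * x ^ (1 / 480 : ℝ) * x ^ (1 / 6 : ℝ) := by
    refine (second_term_le hx hx1 hy hxy).trans ?_
    gcongr
    exact le_mul_of_one_le_left (by positivity) hP
  calc x' ≤ C * (1 / 2 * x * b ^ (2 * n) / σ ^ n + (x / y) ^ (6 / 5 : ℝ)
        + P * x ^ ((1 : ℝ) / 5 - 1 / 32)) * x := hrec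
    _ ≤ C * (3 * (P * x ^ (1 / 480 : ℝ) * x ^ (1 / 6 : ℝ))) * x := by
        rw [third_term_eq hx]
        gcongr
        linarith
    _ = (3 * C * (P * x ^ (1 / 480 : ℝ))) * x ^ (1 / 6 : ℝ) * x := by ring
    _ ≤ 1 * x ^ (1 / 6 : ℝ) * x := by gcongr
    _ = x ^ (7 / 6 : ℝ) := by
        rw [one_mul, show (7 / 6 : ℝ) = 1 / 6 + 1 by norm_num, rpow_add hx, rpow_one]

end KAMError

theorem stmt_13_general (C : ℝ) (hC : 1 ≤ C) (n : ℕ) (σ₀ μ₀ : ℝ)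
    (hσ : σ₀ ∈ Set.Ioc (0 : ℝ) 1) (hμ : μ₀ ∈ Set.Ioc (0 : ℝ) 1) :
    ∃ εstar : ℝ, 0 < εstar ∧
      ∀ ε : ℕ → ℝ, (∀ j, ε j ∈ Set.Ioo (0 : ℝ) 1) →
        ε 1 ≤ ε 0 ^ ((7 : ℝ) / 6) →
        (∀ j : ℕ, 1 ≤ j →
          ε (j + 1) ≤
            C * ((1 / 2) * ε j * ((j : ℝ) + 1) ^ (2 * n) / σ₀ ^ n
              + (ε j / ε (j - 1)) ^ ((6 : ℝ) / 5)
              + ((j : ℝ) + 1) ^ (2 * (n + 1)) / (σ₀ ^ (n + 1) * μ₀ ^ 2)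
                  * ε j ^ ((1 : ℝ) / 5 - 1 / 32)) * ε j) →
        ε 0 ≤ εstar →
        ∀ j : ℕ, 1 ≤ j → ε j ≤ ε 0 ^ (((7 : ℝ) / 6) ^ j) := by
  obtain ⟨hσ0, hσ1⟩ := hσ
  obtain ⟨hμ0, hμ1⟩ := hμ
  have hC0 : 0 < C := by linarith
  obtain ⟨δ, hδ, hsmall⟩ := exists_pos_pow_mul_rpow_pow_le (2 * (n + 1)) (q := 7 / 6)
    (p := 1 / 480) (D := σ₀ ^ (n + 1) * μ₀ ^ 2 / (3 * C)) (by norm_num) (by norm_num)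
    (by positivity)
  refine ⟨δ, hδ, fun ε hε h1 hrec hε0 => ?_⟩
  have hpos : ∀ j, 0 < ε j := fun j => (hε j).1
  suffices key : ∀ j, 1 ≤ j → ε j ≤ ε (j - 1) ^ (7 / 6 : ℝ) ∧ ε j ≤ ε 0 ^ ((7 / 6 : ℝ) ^ j) from
    fun j hj => (key j hj).2
  intro j hj
  induction j, hj using Nat.le_induction with
  | base => simpa using h1
  | succ j hj ih =>
    have hsmall_j : ((j : ℝ) + 1) ^ (2 * (n + 1)) * ε j ^ (1 / 480 : ℝ)
        ≤ σ₀ ^ (n + 1) * μ₀ ^ 2 / (3 * C) :=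
      le_trans (by gcongr; exacts [(hpos j).le, ih.2])
        (hsmall (ε 0) (hpos 0).le hε0 j)
    have hstep : ε (j + 1) ≤ ε j ^ (7 / 6 : ℝ) :=
      KAMError.step_le hC0 (hpos j) (hε j).2.le (hpos _) (by simp) hσ0 hσ1 hμ0 hμ1 ih.1
        hsmall_j (hrec j hj)
    refine ⟨by simpa using hstep, hstep.trans ?_⟩
    calc ε j ^ (7 / 6 : ℝ) ≤ (ε 0 ^ ((7 / 6 : ℝ) ^ j)) ^ (7 / 6 : ℝ) := by
          gcongr; exacts [(hpos j).le, ih.2]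
      _ = ε 0 ^ ((7 / 6 : ℝ) ^ (j + 1)) := by rw [← rpow_mul (hpos 0).le, ← pow_succ]

/-- Lemma 6.2: super-exponential decay of the KAM error sequence.  Given `C ≥ 1`,
`n ≥ 1`, `σ₀, μ₀ ∈ (0,1]`, there is `ε* > 0` (depending only on `C, n, σ₀, μ₀`) such
that any sequence `(ε_j) ⊂ (0,1)` with `ε₁ ≤ ε₀^{7/6}` and satisfying the KAM-step
recursion for all `j ≥ 1` obeys `ε_j ≤ ε₀^{(7/6)^j}` for all `j ≥ 1`, provided
`ε₀ ≤ ε*`. -/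
theorem stmt_13 (C : ℝ) (hC : 1 ≤ C) (n : ℕ) (hn : 1 ≤ n) (σ₀ μ₀ : ℝ)
    (hσ : σ₀ ∈ Set.Ioc (0 : ℝ) 1) (hμ : μ₀ ∈ Set.Ioc (0 : ℝ) 1) :
    ∃ εstar : ℝ, 0 < εstar ∧
      ∀ ε : ℕ → ℝ, (∀ j, ε j ∈ Set.Ioo (0 : ℝ) 1) →
        ε 1 ≤ ε 0 ^ ((7 : ℝ) / 6) →
        (∀ j : ℕ, 1 ≤ j →
          ε (j + 1) ≤
            C * ((1 / 2) * ε j * ((j : ℝ) + 1) ^ (2 * n) / σ₀ ^ n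
              + (ε j / ε (j - 1)) ^ ((6 : ℝ) / 5)
              + ((j : ℝ) + 1) ^ (2 * (n + 1)) / (σ₀ ^ (n + 1) * μ₀ ^ 2)
                  * ε j ^ ((1 : ℝ) / 5 - 1 / 32)) * ε j) →
        ε 0 ≤ εstar →
        ∀ j : ℕ, 1 ≤ j → ε j ≤ ε 0 ^ (((7 : ℝ) / 6) ^ j) :=
  stmt_13_general C hC n σ₀ μ₀ hσ hμ
end

section
/- Let β > 0. There is a constant C depending only on β such that the following holds. If A, B : L × L → M₂(ℝ) are infinite matrices with |A|_{β+} < ∞ and |B|_{β+} < ∞, then for all c, d ∈ L the entry sums (AB)(c,d) = ∑_{e ∈ L} A(c,e)·B(e,d) and (BA)(c,d) = ∑_{e ∈ L} B(c,e)·A(e,d) converge absolutely, and the products satisfy |AB|_{β+} ≤ C·|A|_{β+}·|B|_{β+} and |BA|_{β+} ≤ C·|A|_{β+}·|B|_{β+}. -/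
/-- Squared Frobenius norm of a real `2×2` matrix. -/
def frobSq (M : Matrix (Fin 2) (Fin 2) ℝ) : ℝ := ∑ i, ∑ j, M i j ^ 2

/-- Hilbert–Schmidt norm of the block `A_{[a]}^{[b]}` of an infinite matrix
`A : L × L → M₂(ℝ)`, where `[a] = {c : w c = w a}`. -/
noncomputable def hsBlock {L : Type*} (w : L → ℕ)
    (A : L → L → Matrix (Fin 2) (Fin 2) ℝ) (a b : L) : ℝ :=
  Real.sqrt (∑' p : {c : L // w c = w a} × {d : L // w d = w b}, frobSq (A p.1.1 p.2.1))

/-- Entrywise product of two infinite matrices with `2×2` matrix entries. -/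
noncomputable def infMul {L : Type*} (A B : L → L → Matrix (Fin 2) (Fin 2) ℝ)
    (c d : L) : Matrix (Fin 2) (Fin 2) ℝ :=
  Matrix.of fun i j => ∑' e : L, (A c e * B e d) i j


/-!
Write `m = w a`, `k = w b`. For `c ∈ [a]` and `d ∈ [b]`, the Cauchy–Schwarz inequality with the
weight `ρ(e) = (1 + |m - w e|) / (1 + |k - w e|)` gives
`‖(AB)(c,d)‖² ≤ (∑_e ρ(e) ‖A(c,e)‖²) (∑_e ρ(e)⁻¹ ‖B(e,d)‖²)`. Summing over `c` and `d` and
grouping the `e` by their level `n = w e`,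
`‖(AB)_{[a]}^{[b]}‖² ≤ (∑_n ρ_n ‖A_{[a]}^{[n]}‖²) (∑_n ρ_n⁻¹ ‖B_{[n]}^{[b]}‖²)
  ≤ |A|_{β+}² |B|_{β+}² (m k)^{-2β} (∑_n σ(n))²`,
where `σ(n) = n^{-2β} / ((1 + |m - n|) (1 + |k - n|))`: the weight is chosen so that both factors
produce the same `σ`. Finally `(1 + |m - k|) ∑_n σ(n)` is bounded independently of `m` and `k`:
the triangle inequality `1 + |m - k| ≤ (1 + |m - n|) + (1 + |k - n|)` reduces it to
`∑_n n^{-2β} / (1 + |m - n|)`, which Young's inequality bounds by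
`∑_n n^{-2β-2} + ∑_{j ∈ ℤ} (1 + |j|)^{-1-β}`.
-/

open scoped ENNReal NNReal Matrix.Norms.Frobenius

lemma frobSq_eq_norm_sq (M : Matrix (Fin 2) (Fin 2) ℝ) : frobSq M = ‖M‖ ^ 2 := by
  rw [Matrix.frobenius_norm_def, ← Real.sqrt_eq_rpow, Real.sq_sqrt (by positivity)]
  simp [frobSq]

lemma abs_apply_le_frobenius_norm (M : Matrix (Fin 2) (Fin 2) ℝ) (i j : Fin 2) :
    |M i j| ≤ ‖M‖ := by
  rw [← Real.sqrt_sq (norm_nonneg M), ← frobSq_eq_norm_sq]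
  refine Real.abs_le_sqrt ?_
  calc M i j ^ 2 ≤ ∑ j', M i j' ^ 2 :=
        Finset.single_le_sum (fun j' _ => sq_nonneg (M i j')) (Finset.mem_univ j)
    _ ≤ frobSq M := Finset.single_le_sum (f := fun i' => ∑ j', M i' j' ^ 2)
        (fun i' _ => by positivity) (Finset.mem_univ i)

theorem ENNReal.tsum_sq_le_tsum_mul_tsum {ι : Type*} {r f g : ι → ℝ≥0}
    (h : ∀ i, r i ^ 2 ≤ f i * g i) :
    (∑' i, (r i : ℝ≥0∞)) ^ 2 ≤ (∑' i, (f i : ℝ≥0∞)) * ∑' i, (g i : ℝ≥0∞) := by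
  rw [ENNReal.tsum_eq_iSup_sum, ENNReal.iSup_pow_of_ne_zero two_ne_zero]
  refine iSup_le fun s => ?_
  calc (∑ i ∈ s, (r i : ℝ≥0∞)) ^ 2 ≤ (∑ i ∈ s, (f i : ℝ≥0∞)) * ∑ i ∈ s, (g i : ℝ≥0∞) := by
        exact_mod_cast Finset.sum_sq_le_sum_mul_sum_of_sq_le_mul (R := ℝ≥0) s (fun i _ => (f i).2)
          (fun i _ => (g i).2) fun i _ => h i
    _ ≤ _ := by gcongr <;> exact ENNReal.sum_le_tsum s

section InfiniteMatrix

variable {L : Type*} (w : L → ℕ) (A B : L → L → Matrix (Fin 2) (Fin 2) ℝ)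

lemma summable_nnnorm_mul_of_tsum_ne_top {c d : L}
    (h : ∑' e, (‖A c e‖₊ * ‖B e d‖₊ : ℝ≥0∞) ≠ ⊤) : Summable fun e => ‖A c e * B e d‖₊ :=
  NNReal.summable_of_le (fun e => nnnorm_mul_le _ _)
    (ENNReal.tsum_coe_ne_top_iff_summable.1 (by simpa using h))

lemma infMul_eq_tsum {c d : L} (h : Summable fun e => A c e * B e d) :
    infMul A B c d = ∑' e, A c e * B e d := by
  ext i j
  exact ((congrFun (tsum_apply h) j).trans (tsum_apply (Pi.summable.1 h i))).symm

lemma nnnorm_infMul_le (c d : L) :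
    (‖infMul A B c d‖₊ : ℝ≥0∞) ≤ ∑' e, (‖A c e‖₊ * ‖B e d‖₊ : ℝ≥0∞) := by
  by_cases h : ∑' e, (‖A c e‖₊ * ‖B e d‖₊ : ℝ≥0∞) = ⊤
  · simp [h]
  have hs := summable_nnnorm_mul_of_tsum_ne_top A B h
  calc (‖infMul A B c d‖₊ : ℝ≥0∞) = ‖∑' e, A c e * B e d‖₊ := by
        rw [infMul_eq_tsum A B (NNReal.summable_coe.2 hs).of_norm]
    _ ≤ ∑' e, (‖A c e * B e d‖₊ : ℝ≥0∞) := by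
        rw [← ENNReal.coe_tsum hs]
        exact_mod_cast nnnorm_tsum_le hs
    _ ≤ _ := ENNReal.tsum_le_tsum fun e => by exact_mod_cast nnnorm_mul_le _ _

lemma tsum_nnnorm_mul_sq_le (u v : L → ℝ≥0) (huv : ∀ e, 1 ≤ u e * v e) (c d : L) :
    (∑' e, (‖A c e‖₊ * ‖B e d‖₊ : ℝ≥0∞)) ^ 2 ≤
      (∑' e, (u e * ‖A c e‖₊ ^ 2 : ℝ≥0∞)) * ∑' e, (v e * ‖B e d‖₊ ^ 2 : ℝ≥0∞) := by
  have h := ENNReal.tsum_sq_le_tsum_mul_tsum (r := fun e => ‖A c e‖₊ * ‖B e d‖₊)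
    (f := fun e => u e * ‖A c e‖₊ ^ 2) (g := fun e => v e * ‖B e d‖₊ ^ 2) fun e =>
    calc (‖A c e‖₊ * ‖B e d‖₊) ^ 2 = 1 * (‖A c e‖₊ ^ 2 * ‖B e d‖₊ ^ 2) := by ring
      _ ≤ (u e * v e) * (‖A c e‖₊ ^ 2 * ‖B e d‖₊ ^ 2) := by gcongr; exact huv e
      _ = _ := by ring
  simpa using h

/-- `‖A_{[m]}^{[n]}‖²_HS` for the levels `m`, `n` of `w`, valued in `ℝ≥0∞` so that it needs no
summability. -/
noncomputable def levelHS (m n : ℕ) : ℝ≥0∞ :=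
  ∑' p : {c : L // w c = m} × {d : L // w d = n}, (‖A p.1 p.2‖₊ : ℝ≥0∞) ^ 2

lemma tsum_weight_mul_eq_tsum_levels (κ : L → L → ℝ≥0∞) (v : ℕ → ℝ≥0) (m : ℕ) :
    ∑' c : {c : L // w c = m}, ∑' e, (v (w e) : ℝ≥0∞) * κ c e =
      ∑' n, (v n : ℝ≥0∞) * ∑' c : {c : L // w c = m}, ∑' e : {e : L // w e = n}, κ c e := by
  have fiberwise (g : L → ℝ≥0∞) : ∑' e, g e = ∑' n, ∑' e : {e : L // w e = n}, g e := by
    rw [← (Equiv.sigmaFiberEquiv w).tsum_eq, ENNReal.tsum_sigma']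
    rfl
  calc _ = ∑' c : {c : L // w c = m}, ∑' n, (v n : ℝ≥0∞) * ∑' e : {e : L // w e = n}, κ c e := by
        refine tsum_congr fun c => ?_
        rw [fiberwise]
        refine tsum_congr fun n => ?_
        rw [← ENNReal.tsum_mul_left]
        exact tsum_congr fun e => by rw [e.2]
    _ = _ := by
        rw [ENNReal.tsum_comm]
        simp_rw [ENNReal.tsum_mul_left]

lemma tsum_weighted_rows_eq (u : ℕ → ℝ≥0) (m : ℕ) :
    ∑' c : {c : L // w c = m}, ∑' e, (u (w e) * ‖A c e‖₊ ^ 2 : ℝ≥0∞) =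
      ∑' n, (u n : ℝ≥0∞) * levelHS w A m n := by
  rw [tsum_weight_mul_eq_tsum_levels w (fun c e => (‖A c e‖₊ : ℝ≥0∞) ^ 2)]
  simp_rw [levelHS, ENNReal.tsum_prod']

lemma tsum_weighted_cols_eq (v : ℕ → ℝ≥0) (k : ℕ) :
    ∑' d : {d : L // w d = k}, ∑' e, (v (w e) * ‖B e d‖₊ ^ 2 : ℝ≥0∞) =
      ∑' n, (v n : ℝ≥0∞) * levelHS w B n k := by
  rw [tsum_weight_mul_eq_tsum_levels w (fun d e => (‖B e d‖₊ : ℝ≥0∞) ^ 2)]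
  simp_rw [levelHS, ENNReal.tsum_prod', ENNReal.tsum_comm (α := {d : L // w d = k})]

theorem levelHS_infMul_le (u v : ℕ → ℝ≥0) (huv : ∀ n, 1 ≤ u n * v n) (m k : ℕ) :
    levelHS w (infMul A B) m k ≤
      (∑' n, (u n : ℝ≥0∞) * levelHS w A m n) * ∑' n, (v n : ℝ≥0∞) * levelHS w B n k := by
  rw [← tsum_weighted_rows_eq, ← tsum_weighted_cols_eq, levelHS, ENNReal.tsum_prod',
    ← ENNReal.tsum_mul_right]
  refine ENNReal.tsum_le_tsum fun c => ?_
  rw [← ENNReal.tsum_mul_left]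
  refine ENNReal.tsum_le_tsum fun d => ?_
  exact (pow_le_pow_left' (nnnorm_infMul_le A B c d) 2).trans
    (tsum_nnnorm_mul_sq_le A B (u ∘ w) (v ∘ w) (fun e => huv (w e)) c d)

lemma tsum_nnnorm_mul_ne_top (u v : ℕ → ℝ≥0) (huv : ∀ n, 1 ≤ u n * v n) (c d : L)
    (hA : ∑' n, (u n : ℝ≥0∞) * levelHS w A (w c) n ≠ ⊤)
    (hB : ∑' n, (v n : ℝ≥0∞) * levelHS w B n (w d) ≠ ⊤) :
    ∑' e, (‖A c e‖₊ * ‖B e d‖₊ : ℝ≥0∞) ≠ ⊤ := by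
  have hrow : ∑' e, (u (w e) * ‖A c e‖₊ ^ 2 : ℝ≥0∞) ≠ ⊤ := by
    refine ne_top_of_le_ne_top ?_ (ENNReal.le_tsum (f := fun c' : {c' : L // w c' = w c} =>
      ∑' e, (u (w e) * ‖A c' e‖₊ ^ 2 : ℝ≥0∞)) ⟨c, rfl⟩)
    rwa [tsum_weighted_rows_eq]
  have hcol : ∑' e, (v (w e) * ‖B e d‖₊ ^ 2 : ℝ≥0∞) ≠ ⊤ := by
    refine ne_top_of_le_ne_top ?_ (ENNReal.le_tsum (f := fun d' : {d' : L // w d' = w d} =>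
      ∑' e, (v (w e) * ‖B e d'‖₊ ^ 2 : ℝ≥0∞)) ⟨d, rfl⟩)
    rwa [tsum_weighted_cols_eq]
  have h := (tsum_nnnorm_mul_sq_le A B (u ∘ w) (v ∘ w) (fun e => huv (w e)) c d).trans_lt
    (ENNReal.mul_lt_top hrow.lt_top hcol.lt_top)
  exact (ENNReal.pow_lt_top_iff.1 h).resolve_right two_ne_zero |>.ne

end InfiniteMatrix

lemma rpow_div_le_add_rpow {β x y : ℝ} (hβ : 0 < β) (hx : 0 ≤ x) (hy : 0 < y) :
    x ^ (-(2 * β)) / y ≤ x ^ (-(2 * β + 2)) + y ^ (-(1 + β)) := by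
  have hpq : ((1 + β) / β).HolderConjugate (1 + β) :=
    Real.holderConjugate_iff.2 ⟨by rw [lt_div_iff₀ hβ]; linarith, by field_simp; ring⟩
  have hp : 1 ≤ (1 + β) / β := hpq.lt.le
  have young := Real.young_inequality_of_nonneg (Real.rpow_nonneg hx (-(2 * β)))
    (inv_nonneg.2 hy.le) hpq
  rw [← Real.rpow_mul hx, Real.inv_rpow hy.le, ← Real.rpow_neg hy.le] at young
  have hexp : -(2 * β) * ((1 + β) / β) = -(2 * β + 2) := by field_simp; ring
  rw [hexp] at young
  calc x ^ (-(2 * β)) / y = x ^ (-(2 * β)) * y⁻¹ := div_eq_mul_inv _ _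
    _ ≤ _ := young
    _ ≤ _ := by
        gcongr
        · exact div_le_self (Real.rpow_nonneg hx _) hp
        · exact div_le_self (Real.rpow_nonneg hy.le _) (by linarith)

lemma summable_one_add_abs_int_rpow {q : ℝ} (hq : 1 < q) :
    Summable fun j : ℤ => (1 + |(j : ℝ)|) ^ (-q) := by
  have h : Summable fun n : ℕ => (1 + (n : ℝ)) ^ (-q) := by
    have := (summable_nat_add_iff 1).2 (Real.summable_nat_rpow.2 (by linarith : -q < -1))
    simpa [add_comm] using this
  exact .of_nat_of_neg (by simpa using h) (by simpa using h)

lemma tsum_one_add_abs_sub_rpow_le {q : ℝ} (hq : 1 < q) (m : ℕ) :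
    Summable (fun n : ℕ => (1 + |(m : ℝ) - n|) ^ (-q)) ∧
      ∑' n : ℕ, (1 + |(m : ℝ) - n|) ^ (-q) ≤ ∑' j : ℤ, (1 + |(j : ℝ)|) ^ (-q) := by
  set F : ℤ → ℝ := fun j => (1 + |(m : ℝ) - j|) ^ (-q)
  have hF : F = (fun j : ℤ => (1 + |(j : ℝ)|) ^ (-q)) ∘ Equiv.subLeft (m : ℤ) := by
    ext j; simp [F]
  have hFs : Summable F := by
    rw [hF]; exact (Equiv.summable_iff _).2 (summable_one_add_abs_int_rpow hq)
  refine ⟨hFs.comp_injective Nat.cast_injective, ?_⟩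
  calc ∑' n : ℕ, F n ≤ ∑' j, F j :=
        tsum_comp_le_tsum_of_inj hFs (fun j => by positivity) Nat.cast_injective
    _ = _ := by rw [hF]; exact (Equiv.subLeft (m : ℤ)).tsum_eq (fun j : ℤ => (1 + |(j : ℝ)|) ^ (-q))

noncomputable def pathWeight (β : ℝ) (m k n : ℕ) : ℝ :=
  (n : ℝ) ^ (-(2 * β)) / ((1 + |(m : ℝ) - n|) * (1 + |(k : ℝ) - n|))

lemma pathWeight_nonneg (β : ℝ) (m k n : ℕ) : 0 ≤ pathWeight β m k n := by
  unfold pathWeight; positivity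

lemma pathWeight_comm (β : ℝ) (m k : ℕ) : pathWeight β m k = pathWeight β k m := by
  ext n; simp only [pathWeight, mul_comm]

lemma exists_tsum_rpow_div_le {β : ℝ} (hβ : 0 < β) : ∃ C, ∀ m : ℕ,
    Summable (fun n : ℕ => (n : ℝ) ^ (-(2 * β)) / (1 + |(m : ℝ) - n|)) ∧
      ∑' n : ℕ, (n : ℝ) ^ (-(2 * β)) / (1 + |(m : ℝ) - n|) ≤ C := by
  have hs : Summable fun n : ℕ => (n : ℝ) ^ (-(2 * β + 2)) :=
    Real.summable_nat_rpow.2 (by linarith)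
  refine ⟨∑' n : ℕ, (n : ℝ) ^ (-(2 * β + 2)) + ∑' j : ℤ, (1 + |(j : ℝ)|) ^ (-(1 + β)),
    fun m => ?_⟩
  obtain ⟨hm, hm_le⟩ := tsum_one_add_abs_sub_rpow_le (by linarith : 1 < 1 + β) m
  have hle (n : ℕ) : (n : ℝ) ^ (-(2 * β)) / (1 + |(m : ℝ) - n|) ≤
      (n : ℝ) ^ (-(2 * β + 2)) + (1 + |(m : ℝ) - n|) ^ (-(1 + β)) :=
    rpow_div_le_add_rpow hβ n.cast_nonneg (by positivity)
  have hT := (hs.add hm).of_nonneg_of_le (fun n => by positivity) hle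
  refine ⟨hT, ?_⟩
  calc _ ≤ ∑' n : ℕ, ((n : ℝ) ^ (-(2 * β + 2)) + (1 + |(m : ℝ) - n|) ^ (-(1 + β))) :=
        hT.tsum_le_tsum hle (hs.add hm)
    _ ≤ _ := by rw [hs.tsum_add hm]; gcongr

lemma exists_pathWeight_bound {β : ℝ} (hβ : 0 < β) : ∃ C > 0, ∀ m k : ℕ,
    Summable (pathWeight β m k) ∧ (1 + |(m : ℝ) - k|) * ∑' n, pathWeight β m k n ≤ C := by
  obtain ⟨C, hC⟩ := exists_tsum_rpow_div_le hβ
  refine ⟨max (2 * C) 1, by positivity, fun m k => ?_⟩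
  obtain ⟨hm, hmC⟩ := hC m
  obtain ⟨hk, hkC⟩ := hC k
  have split (n : ℕ) : (1 + |(m : ℝ) - k|) * pathWeight β m k n ≤
      (n : ℝ) ^ (-(2 * β)) / (1 + |(k : ℝ) - n|) + (n : ℝ) ^ (-(2 * β)) / (1 + |(m : ℝ) - n|) := by
    have tri : 1 + |(m : ℝ) - k| ≤ (1 + |(m : ℝ) - n|) + (1 + |(k : ℝ) - n|) := by
      linarith [abs_sub_le (m : ℝ) n k, abs_sub_comm (n : ℝ) k]
    calc _ ≤ ((1 + |(m : ℝ) - n|) + (1 + |(k : ℝ) - n|)) * pathWeight β m k n := by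
          gcongr; exact pathWeight_nonneg β m k n
      _ = _ := by unfold pathWeight; field_simp
  have hσ : Summable (pathWeight β m k) := by
    refine hm.of_nonneg_of_le (pathWeight_nonneg β m k) fun n => ?_
    unfold pathWeight
    gcongr
    exact le_mul_of_one_le_right (by positivity) (by simp)
  refine ⟨hσ, ?_⟩
  calc (1 + |(m : ℝ) - k|) * ∑' n, pathWeight β m k n
      = ∑' n, (1 + |(m : ℝ) - k|) * pathWeight β m k n := tsum_mul_left.symm
    _ ≤ _ := (hσ.mul_left _).tsum_le_tsum split (hk.add hm)
    _ = _ := hk.tsum_add hm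
    _ ≤ 2 * C := by linarith
    _ ≤ _ := le_max_left _ _

noncomputable def decayBound (β K : ℝ) (m n : ℕ) : ℝ :=
  K / ((1 + |(m : ℝ) - n|) * (m : ℝ) ^ β * (n : ℝ) ^ β)

lemma decayBound_comm (β K : ℝ) (m n : ℕ) : decayBound β K m n = decayBound β K n m := by
  simp only [decayBound, abs_sub_comm (m : ℝ)]
  ring

noncomputable def levelWeight (m k n : ℕ) : ℝ≥0 :=
  Real.toNNReal ((1 + |(m : ℝ) - n|) / (1 + |(k : ℝ) - n|))

lemma levelWeight_mul_swap (m k n : ℕ) : levelWeight m k n * levelWeight k m n = 1 := by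
  have h : (1 + |(m : ℝ) - n|) / (1 + |(k : ℝ) - n|) * ((1 + |(k : ℝ) - n|) / (1 + |(m : ℝ) - n|))
      = 1 := by field_simp
  rw [levelWeight, levelWeight, ← Real.toNNReal_mul (by positivity), h, Real.toNNReal_one]

lemma levelWeight_mul_decayBound_sq (β K : ℝ) (m k n : ℕ) :
    levelWeight m k n * decayBound β K m n ^ 2 = (K / (m : ℝ) ^ β) ^ 2 * pathWeight β m k n := by
  have hn : (n : ℝ) ^ (-(2 * β)) = (((n : ℝ) ^ β) ^ 2)⁻¹ := by
    rw [Real.rpow_neg n.cast_nonneg, ← Real.rpow_natCast, ← Real.rpow_mul n.cast_nonneg]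
    ring_nf
  have hP : 1 + |(m : ℝ) - n| ≠ 0 := by positivity
  have hQ : 1 + |(k : ℝ) - n| ≠ 0 := by positivity
  rw [levelWeight, Real.coe_toNNReal _ (by positivity)]
  simp only [decayBound, pathWeight, hn]
  field_simp

lemma tsum_levelWeight_mul_le {β K : ℝ} {m k : ℕ} (X : ℕ → ℝ≥0∞)
    (hX : ∀ n, X n ≤ ENNReal.ofReal (decayBound β K m n ^ 2))
    (hσ : Summable (pathWeight β m k)) :
    ∑' n, (levelWeight m k n : ℝ≥0∞) * X n ≤
      ENNReal.ofReal ((K / (m : ℝ) ^ β) ^ 2 * ∑' n, pathWeight β m k n) := by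
  calc _ ≤ ∑' n, ENNReal.ofReal (levelWeight m k n * decayBound β K m n ^ 2) :=
        ENNReal.tsum_le_tsum fun n => by
          rw [ENNReal.ofReal_mul (NNReal.coe_nonneg _), ENNReal.ofReal_coe_nnreal]
          exact mul_le_mul_of_nonneg_left (hX n) (by positivity)
    _ = ∑' n, ENNReal.ofReal ((K / (m : ℝ) ^ β) ^ 2 * pathWeight β m k n) := by
        simp_rw [levelWeight_mul_decayBound_sq]
    _ = _ := by
        rw [← ENNReal.ofReal_tsum_of_nonneg
          (fun n => mul_nonneg (sq_nonneg _) (pathWeight_nonneg β m k n)) (hσ.mul_left _),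
          tsum_mul_left]

section Blocks

variable {L : Type*} (w : L → ℕ) (A B : L → L → Matrix (Fin 2) (Fin 2) ℝ)

lemma hsBlock_nonneg (a b : L) : 0 ≤ hsBlock w A a b := Real.sqrt_nonneg _

lemma ofReal_frobSq (M : Matrix (Fin 2) (Fin 2) ℝ) :
    ENNReal.ofReal (frobSq M) = (‖M‖₊ : ℝ≥0∞) ^ 2 := by
  rw [frobSq_eq_norm_sq, ENNReal.ofReal_pow (norm_nonneg _), ← coe_nnnorm,
    ENNReal.ofReal_coe_nnreal]

lemma hsBlock_sq (a b : L) :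
    hsBlock w A a b ^ 2 = ∑' p : {c : L // w c = w a} × {d : L // w d = w b},
      frobSq (A p.1.1 p.2.1) :=
  Real.sq_sqrt (tsum_nonneg fun p => by rw [frobSq_eq_norm_sq]; positivity)

lemma ofReal_hsBlock_sq_eq (a b : L)
    (h : Summable fun p : {c : L // w c = w a} × {d : L // w d = w b} => frobSq (A p.1.1 p.2.1)) :
    ENNReal.ofReal (hsBlock w A a b ^ 2) = levelHS w A (w a) (w b) := by
  rw [hsBlock_sq, ENNReal.ofReal_tsum_of_nonneg
    (fun p => by rw [frobSq_eq_norm_sq]; positivity) h]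
  simp_rw [ofReal_frobSq, levelHS]

lemma ofReal_hsBlock_sq_le (a b : L) :
    ENNReal.ofReal (hsBlock w A a b ^ 2) ≤ levelHS w A (w a) (w b) := by
  by_cases h : Summable fun p : {c : L // w c = w a} × {d : L // w d = w b} =>
    frobSq (A p.1.1 p.2.1)
  · exact (ofReal_hsBlock_sq_eq w A a b h).le
  · simp [hsBlock_sq, tsum_eq_zero_of_not_summable h]

lemma nonneg_of_hsBlock_le {β K : ℝ}
    (hK : ∀ a b : L, (1 + |(w a : ℝ) - (w b : ℝ)|) * (w a : ℝ) ^ β * (w b : ℝ) ^ β *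
      hsBlock w A a b ≤ K) (a : L) : 0 ≤ K :=
  (mul_nonneg (by positivity) (hsBlock_nonneg w A a a)).trans (hK a a)

lemma levelHS_le_decayBound {β K : ℝ} (hw : ∀ a, 1 ≤ w a)
    (hA : ∀ a b : L, Summable fun p : {c : L // w c = w a} × {d : L // w d = w b} =>
      frobSq (A p.1.1 p.2.1))
    (hK : ∀ a b : L, (1 + |(w a : ℝ) - (w b : ℝ)|) * (w a : ℝ) ^ β * (w b : ℝ) ^ β *
      hsBlock w A a b ≤ K) (m n : ℕ) :
    levelHS w A m n ≤ ENNReal.ofReal (decayBound β K m n ^ 2) := by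
  rcases isEmpty_or_nonempty {c : L // w c = m} with hm | ⟨a, rfl⟩
  · simp [levelHS]
  rcases isEmpty_or_nonempty {d : L // w d = n} with hn | ⟨b, rfl⟩
  · simp [levelHS]
  have hpos : 0 < (1 + |(w a : ℝ) - w b|) * (w a : ℝ) ^ β * (w b : ℝ) ^ β := by
    have ha : (0 : ℝ) < w a := by exact_mod_cast hw a
    have hb : (0 : ℝ) < w b := by exact_mod_cast hw b
    positivity
  rw [← ofReal_hsBlock_sq_eq w A a b (hA a b)]
  refine ENNReal.ofReal_le_ofReal (pow_le_pow_left₀ (hsBlock_nonneg w A a b) ?_ 2)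
  rw [decayBound, le_div_iff₀ hpos, mul_comm]
  exact hK a b

variable {β KA KB : ℝ}

lemma weighted_levelHS_le
    (hA : ∀ m n, levelHS w A m n ≤ ENNReal.ofReal (decayBound β KA m n ^ 2))
    (hB : ∀ m n, levelHS w B m n ≤ ENNReal.ofReal (decayBound β KB m n ^ 2)) {m k : ℕ}
    (hσ : Summable (pathWeight β m k)) :
    ∑' n, (levelWeight m k n : ℝ≥0∞) * levelHS w A m n ≤
        ENNReal.ofReal ((KA / (m : ℝ) ^ β) ^ 2 * ∑' n, pathWeight β m k n) ∧
      ∑' n, (levelWeight k m n : ℝ≥0∞) * levelHS w B n k ≤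
        ENNReal.ofReal ((KB / (k : ℝ) ^ β) ^ 2 * ∑' n, pathWeight β m k n) := by
  refine ⟨tsum_levelWeight_mul_le _ (hA m) hσ, ?_⟩
  rw [pathWeight_comm]
  refine tsum_levelWeight_mul_le _ (fun n => ?_) (pathWeight_comm β m k ▸ hσ)
  rw [decayBound_comm]
  exact hB n k

theorem summable_abs_mul_apply (hσ : ∀ m k : ℕ, Summable (pathWeight β m k))
    (hA : ∀ m n, levelHS w A m n ≤ ENNReal.ofReal (decayBound β KA m n ^ 2))
    (hB : ∀ m n, levelHS w B m n ≤ ENNReal.ofReal (decayBound β KB m n ^ 2))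
    (c d : L) (i j : Fin 2) : Summable fun e => |(A c e * B e d) i j| := by
  obtain ⟨hrow, hcol⟩ := weighted_levelHS_le w A B hA hB (hσ (w c) (w d))
  have hfin := tsum_nnnorm_mul_ne_top w A B _ _ (fun n => (levelWeight_mul_swap _ _ n).ge) c d
    (ne_top_of_le_ne_top ENNReal.ofReal_ne_top hrow)
    (ne_top_of_le_ne_top ENNReal.ofReal_ne_top hcol)
  exact (NNReal.summable_coe.2 (summable_nnnorm_mul_of_tsum_ne_top A B hfin)).of_nonneg_of_le
    (fun _ => abs_nonneg _) fun e => abs_apply_le_frobenius_norm _ i j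

theorem hsBlock_infMul_le {C : ℝ} (hw : ∀ a, 1 ≤ w a) (hKA : 0 ≤ KA) (hKB : 0 ≤ KB)
    (hconv : ∀ m k : ℕ, Summable (pathWeight β m k) ∧
      (1 + |(m : ℝ) - k|) * ∑' n, pathWeight β m k n ≤ C)
    (hA : ∀ m n, levelHS w A m n ≤ ENNReal.ofReal (decayBound β KA m n ^ 2))
    (hB : ∀ m n, levelHS w B m n ≤ ENNReal.ofReal (decayBound β KB m n ^ 2)) (a b : L) :
    (1 + |(w a : ℝ) - (w b : ℝ)|) * (w a : ℝ) ^ β * (w b : ℝ) ^ β *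
      hsBlock w (infMul A B) a b ≤ C * KA * KB := by
  obtain ⟨hσ, hC⟩ := hconv (w a) (w b)
  obtain ⟨hrow, hcol⟩ := weighted_levelHS_le w A B hA hB hσ
  set S := ∑' n, pathWeight β (w a) (w b) n
  have hS : 0 ≤ S := tsum_nonneg (pathWeight_nonneg β _ _)
  have hMa : 0 < (w a : ℝ) ^ β := Real.rpow_pos_of_pos (by exact_mod_cast hw a) β
  have hMb : 0 < (w b : ℝ) ^ β := Real.rpow_pos_of_pos (by exact_mod_cast hw b) β
  have hsq : hsBlock w (infMul A B) a b ^ 2 ≤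
      (KA / (w a : ℝ) ^ β * (KB / (w b : ℝ) ^ β) * S) ^ 2 := by
    rw [← ENNReal.ofReal_le_ofReal_iff (by positivity)]
    calc ENNReal.ofReal (hsBlock w (infMul A B) a b ^ 2)
        ≤ levelHS w (infMul A B) (w a) (w b) := ofReal_hsBlock_sq_le w _ a b
      _ ≤ _ := levelHS_infMul_le w A B _ _ (fun n => (levelWeight_mul_swap _ _ n).ge) _ _
      _ ≤ _ := mul_le_mul' hrow hcol
      _ = _ := by rw [← ENNReal.ofReal_mul (by positivity)]; ring_nf
  have hle := (pow_le_pow_iff_left₀ (hsBlock_nonneg w _ a b) (by positivity) two_ne_zero).1 hsq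
  calc _ ≤ (1 + |(w a : ℝ) - (w b : ℝ)|) * (w a : ℝ) ^ β * (w b : ℝ) ^ β *
        (KA / (w a : ℝ) ^ β * (KB / (w b : ℝ) ^ β) * S) := by gcongr
    _ = KA * KB * ((1 + |(w a : ℝ) - (w b : ℝ)|) * S) := by field_simp
    _ ≤ KA * KB * C := by gcongr
    _ = C * KA * KB := by ring

end Blocks

/-- Lemma 4.1(ii): for `β > 0` there is `C = C(β)` such that if `|A|_{β+} ≤ KA` and
`|B|_{β+} ≤ KB` then the entry sums of `AB` and `BA` converge absolutely and
`|AB|_{β+}, |BA|_{β+} ≤ C · KA · KB`. -/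
theorem stmt_15 (β : ℝ) (hβ : 0 < β) :
    ∃ C : ℝ, 0 < C ∧
      ∀ (L : Type) (_ : Countable L) (w : L → ℕ), (∀ a, 1 ≤ w a) →
      ∀ (A B : L → L → Matrix (Fin 2) (Fin 2) ℝ) (KA KB : ℝ),
        (∀ a b : L, Summable fun p : {c : L // w c = w a} × {d : L // w d = w b} =>
          frobSq (A p.1.1 p.2.1)) →
        (∀ a b : L, Summable fun p : {c : L // w c = w a} × {d : L // w d = w b} =>
          frobSq (B p.1.1 p.2.1)) →
        (∀ a b : L, (1 + |(w a : ℝ) - (w b : ℝ)|) * (w a : ℝ) ^ β * (w b : ℝ) ^ β *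
          hsBlock w A a b ≤ KA) →
        (∀ a b : L, (1 + |(w a : ℝ) - (w b : ℝ)|) * (w a : ℝ) ^ β * (w b : ℝ) ^ β *
          hsBlock w B a b ≤ KB) →
        (∀ c d : L, ∀ i j : Fin 2, Summable fun e : L => |(A c e * B e d) i j|) ∧
        (∀ c d : L, ∀ i j : Fin 2, Summable fun e : L => |(B c e * A e d) i j|) ∧
        (∀ a b : L, (1 + |(w a : ℝ) - (w b : ℝ)|) * (w a : ℝ) ^ β * (w b : ℝ) ^ β *
          hsBlock w (infMul A B) a b ≤ C * KA * KB) ∧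
        (∀ a b : L, (1 + |(w a : ℝ) - (w b : ℝ)|) * (w a : ℝ) ^ β * (w b : ℝ) ^ β *
          hsBlock w (infMul B A) a b ≤ C * KA * KB) := by
  obtain ⟨C, hC, hconv⟩ := exists_pathWeight_bound hβ
  refine ⟨C, hC, fun L _ w hw A B KA KB hA hB hKA hKB => ?_⟩
  have hA' := levelHS_le_decayBound w A hw hA hKA
  have hB' := levelHS_le_decayBound w B hw hB hKB
  have hσ m k := (hconv m k).1
  refine ⟨summable_abs_mul_apply w A B hσ hA' hB', summable_abs_mul_apply w B A hσ hB' hA',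
    fun a b => ?_, fun a b => ?_⟩
  · exact hsBlock_infMul_le w A B hw (nonneg_of_hsBlock_le w A hKA a)
      (nonneg_of_hsBlock_le w B hKB a) hconv hA' hB' a b
  · rw [mul_right_comm C]
    exact hsBlock_infMul_le w B A hw (nonneg_of_hsBlock_le w B hKB a)
      (nonneg_of_hsBlock_le w A hKA a) hconv hB' hA' a b
end

section
/- Let β > 0 and s ≥ 0. There is a constant C depending only on β such that the following holds. If A : L × L → M₂(ℝ) is an infinite matrix with |A|_{β+} < ∞ and ζ : L → ℝ² satisfies ‖ζ‖_s < ∞, then for every c ∈ L the sum (Aζ)_c = ∑_{e ∈ L} A(c,e)·ζ_e converges absolutely, and |Aζ|_β ≤ C·|A|_{β+}·‖ζ‖_s. -/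
/-- Squared Euclidean norm on `ℝ²` (viewed as `Fin 2 → ℝ`). -/
def vec2NormSq (v : Fin 2 → ℝ) : ℝ := ∑ i, v i ^ 2

/-- Action of an infinite matrix `A : L × L → M₂(ℝ)` on a vector `ζ : L → ℝ²`. -/
noncomputable def infMulVec {L : Type*} (A : L → L → Matrix (Fin 2) (Fin 2) ℝ)
    (ζ : L → Fin 2 → ℝ) (c : L) : Fin 2 → ℝ :=
  fun i => ∑' e : L, (A c e).mulVec (ζ e) i

/-! Since `w ≥ 1` and `s ≥ 0`, `∑ₑ |ζₑ|² ≤ ‖ζ‖ₛ²`. Cauchy–Schwarz along a row gives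
`|(Aζ)_c|² ≤ 2 (∑ₑ ‖A(c,e)‖_F²) ∑ₑ |ζₑ|²`. Summing over `c ∈ [a]` and grouping the columns by
energy `n`, the rows of `[a]` carry `∑ₙ ‖A_{[a]}^{[n]}‖²_HS ≤ |A|²_{β+} (w a)^{-2β} ∑ₙ (1 + |w a - n|)⁻²`,
and the last sum is at most `∑_{k ∈ ℤ} (1 + |k|)⁻²`, independently of `a`. -/

open scoped ENNReal

lemma frobSq_nonneg (M : Matrix (Fin 2) (Fin 2) ℝ) : 0 ≤ frobSq M := by
  unfold frobSq; positivity

lemma vec2NormSq_nonneg (v : Fin 2 → ℝ) : 0 ≤ vec2NormSq v := by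
  unfold vec2NormSq; positivity

lemma mulVec_apply_sq_le (M : Matrix (Fin 2) (Fin 2) ℝ) (v : Fin 2 → ℝ) (i : Fin 2) :
    M.mulVec v i ^ 2 ≤ frobSq M * vec2NormSq v := by
  have row_le : ∑ j, M i j ^ 2 ≤ frobSq M :=
    Finset.single_le_sum (f := fun i => ∑ j, M i j ^ 2) (fun _ _ => by positivity)
      (Finset.mem_univ i)
  calc M.mulVec v i ^ 2 ≤ (∑ j, M i j ^ 2) * vec2NormSq v :=
        Finset.sum_mul_sq_le_sq_mul_sq Finset.univ (M i) v
    _ ≤ frobSq M * vec2NormSq v := mul_le_mul_of_nonneg_right row_le (vec2NormSq_nonneg v)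

section Series

variable {ι κ : Type*}

lemma summable_abs_of_sq_le_mul {u f g : ι → ℝ} (hf : ∀ i, 0 ≤ f i) (hg : ∀ i, 0 ≤ g i)
    (hfs : Summable f) (hgs : Summable g) (hu : ∀ i, u i ^ 2 ≤ f i * g i) :
    Summable fun i => |u i| := by
  refine ((hfs.add hgs).div_const 2).of_nonneg_of_le (fun i => abs_nonneg _) fun i => ?_
  rw [← sq_le_sq₀ (abs_nonneg _) (by linarith [hf i, hg i]), sq_abs]
  nlinarith [hu i, sq_nonneg (f i - g i)]

lemma abs_tsum_le_tsum_abs {u : ι → ℝ} (hu : Summable fun i => |u i|) :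
    |∑' i, u i| ≤ ∑' i, |u i| := by
  simpa only [Real.norm_eq_abs] using norm_tsum_le_tsum_norm (f := u) hu

lemma tsum_sq_le_tsum_mul_tsum {u f g : ι → ℝ} (hf : ∀ i, 0 ≤ f i) (hg : ∀ i, 0 ≤ g i)
    (hfs : Summable f) (hgs : Summable g) (hu : ∀ i, u i ^ 2 ≤ f i * g i) :
    (∑' i, u i) ^ 2 ≤ (∑' i, f i) * ∑' i, g i := by
  have hsum := summable_abs_of_sq_le_mul hf hg hfs hgs hu
  have hu' : ∀ i, |u i| ≤ √(f i) * √(g i) := fun i =>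
    (Real.abs_le_sqrt (hu i)).trans_eq (Real.sqrt_mul (hf i) _)
  have habs : ∑' i, |u i| ≤ √(∑' i, f i) * √(∑' i, g i) := by
    refine hsum.tsum_le_of_sum_le fun s => ?_
    calc ∑ i ∈ s, |u i| ≤ ∑ i ∈ s, √(f i) * √(g i) := Finset.sum_le_sum fun i _ => hu' i
      _ ≤ √(∑ i ∈ s, f i) * √(∑ i ∈ s, g i) := Real.sum_sqrt_mul_sqrt_le s hf hg
      _ ≤ √(∑' i, f i) * √(∑' i, g i) := by
        gcongr
        · exact hfs.sum_le_tsum s fun i _ => hf i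
        · exact hgs.sum_le_tsum s fun i _ => hg i
  calc (∑' i, u i) ^ 2 = |∑' i, u i| ^ 2 := (sq_abs _).symm
    _ ≤ (√(∑' i, f i) * √(∑' i, g i)) ^ 2 :=
      pow_le_pow_left₀ (abs_nonneg _) ((abs_tsum_le_tsum_abs hsum).trans habs) 2
    _ = (∑' i, f i) * ∑' i, g i := by
      rw [mul_pow, Real.sq_sqrt (tsum_nonneg hf), Real.sq_sqrt (tsum_nonneg hg)]

lemma summable_and_tsum_le_of_tsum_ofReal_le {f : ι → ℝ} (hf : ∀ i, 0 ≤ f i) {M : ℝ}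
    (hM : 0 ≤ M) (h : ∑' i, ENNReal.ofReal (f i) ≤ ENNReal.ofReal M) :
    Summable f ∧ ∑' i, f i ≤ M := by
  have hs : Summable f :=
    (ENNReal.summable_toReal (ne_top_of_le_ne_top ENNReal.ofReal_ne_top h)).congr
      fun i => ENNReal.toReal_ofReal (hf i)
  rw [← ENNReal.ofReal_tsum_of_nonneg hf hs, ENNReal.ofReal_le_ofReal_iff hM] at h
  exact ⟨hs, h⟩

lemma summable_and_tsum_tsum_le_of_tsum_tsum_ofReal_le {f : ι → κ → ℝ}
    (hf : ∀ i j, 0 ≤ f i j) {M : ℝ} (hM : 0 ≤ M)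
    (h : ∑' i, ∑' j, ENNReal.ofReal (f i j) ≤ ENNReal.ofReal M) :
    (∀ i, Summable (f i)) ∧ Summable (fun i => ∑' j, f i j) ∧ ∑' i, ∑' j, f i j ≤ M := by
  have hrow : ∀ i, Summable (f i) := fun i =>
    (summable_and_tsum_le_of_tsum_ofReal_le (hf i) hM ((ENNReal.le_tsum i).trans h)).1
  have hrow_eq : ∀ i, ∑' j, ENNReal.ofReal (f i j) = ENNReal.ofReal (∑' j, f i j) := fun i =>
    (ENNReal.ofReal_tsum_of_nonneg (hf i) (hrow i)).symm
  simp_rw [hrow_eq] at h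
  exact ⟨hrow, summable_and_tsum_le_of_tsum_ofReal_le (fun i => tsum_nonneg (hf i)) hM h⟩

end Series

noncomputable def sumInvOneAddAbsSq : ℝ := ∑' k : ℤ, ((1 + |(k : ℝ)|) ^ 2)⁻¹

lemma summable_inv_one_add_abs_sq : Summable fun k : ℤ => ((1 + |(k : ℝ)|) ^ 2)⁻¹ := by
  have hnat : Summable fun n : ℕ => ((1 + (n : ℝ)) ^ 2)⁻¹ := by
    simpa [add_comm] using (summable_nat_add_iff 1).2 (Real.summable_nat_pow_inv.2 one_lt_two)
  exact .of_nat_of_neg (by simpa using hnat) (by simpa using hnat)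

lemma sumInvOneAddAbsSq_pos : 0 < sumInvOneAddAbsSq :=
  summable_inv_one_add_abs_sq.tsum_pos (fun _ => by positivity) 0 (by norm_num)

lemma tsum_ofReal_inv_one_add_abs_sub_sq_le (m : ℕ) :
    ∑' n : ℕ, ENNReal.ofReal ((1 + |(m : ℝ) - n|) ^ 2)⁻¹ ≤ ENNReal.ofReal sumInvOneAddAbsSq := by
  have hinj : Function.Injective fun n : ℕ => (n : ℤ) - m := fun a b h => by simpa using h
  calc ∑' n : ℕ, ENNReal.ofReal ((1 + |(m : ℝ) - n|) ^ 2)⁻¹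
      = ∑' n : ℕ, (fun k : ℤ => ENNReal.ofReal ((1 + |(k : ℝ)|) ^ 2)⁻¹) ((n : ℤ) - m) := by
        refine tsum_congr fun n => ?_
        push_cast
        rw [abs_sub_comm]
    _ ≤ ∑' k : ℤ, ENNReal.ofReal ((1 + |(k : ℝ)|) ^ 2)⁻¹ :=
        ENNReal.tsum_comp_le_tsum_of_injective hinj _
    _ = ENNReal.ofReal sumInvOneAddAbsSq := by
        rw [sumInvOneAddAbsSq,
          ENNReal.ofReal_tsum_of_nonneg (fun _ => by positivity) summable_inv_one_add_abs_sq]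

lemma tsum_tsum_le_of_block_le {L : Type*} (w : L → ℕ) {F : L → L → ℝ≥0∞} {K : ℝ≥0∞} (a : L)
    (hF : ∀ d, ∑' p : {c // w c = w a} × {e // w e = w d}, F p.1 p.2 ≤
      K * ENNReal.ofReal ((1 + |(w a : ℝ) - w d|) ^ 2)⁻¹) :
    ∑' (c : {c // w c = w a}) (e : L), F c e ≤ K * ENNReal.ofReal sumInvOneAddAbsSq := by
  have hlevel : ∀ n : ℕ, ∑' p : {c // w c = w a} × (w ⁻¹' {n}), F p.1 p.2 ≤
      K * ENNReal.ofReal ((1 + |(w a : ℝ) - n|) ^ 2)⁻¹ := by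
    intro n
    by_cases hn : ∃ d, w d = n
    · obtain ⟨d, rfl⟩ := hn
      exact hF d
    · have : IsEmpty (w ⁻¹' {n}) := ⟨fun e => hn ⟨e, e.2⟩⟩
      rw [tsum_empty]
      exact zero_le
  calc ∑' (c : {c // w c = w a}) (e : L), F c e
      = ∑' (c : {c // w c = w a}) (n : ℕ) (e : w ⁻¹' {n}), F c e :=
        tsum_congr fun c => (ENNReal.tsum_fiberwise _ w).symm
    _ = ∑' (n : ℕ) (p : {c // w c = w a} × (w ⁻¹' {n})), F p.1 p.2 := by
        rw [ENNReal.tsum_comm]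
        exact tsum_congr fun n => ENNReal.tsum_prod.symm
    _ ≤ ∑' n : ℕ, K * ENNReal.ofReal ((1 + |(w a : ℝ) - n|) ^ 2)⁻¹ :=
        ENNReal.tsum_le_tsum hlevel
    _ ≤ K * ENNReal.ofReal sumInvOneAddAbsSq := by
        rw [ENNReal.tsum_mul_left]
        gcongr
        exact tsum_ofReal_inv_one_add_abs_sub_sq_le (w a)

section InfiniteMatrix

variable {L : Type*} {A : L → L → Matrix (Fin 2) (Fin 2) ℝ} {ζ : L → Fin 2 → ℝ}

lemma summable_abs_mulVec_apply {c : L} (hA : Summable fun e => frobSq (A c e))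
    (hζ : Summable fun e => vec2NormSq (ζ e)) (i : Fin 2) :
    Summable fun e => |(A c e).mulVec (ζ e) i| :=
  summable_abs_of_sq_le_mul (fun _ => frobSq_nonneg _) (fun _ => vec2NormSq_nonneg _) hA hζ
    fun _ => mulVec_apply_sq_le _ _ i

lemma vec2NormSq_infMulVec_le {c : L} (hA : Summable fun e => frobSq (A c e))
    (hζ : Summable fun e => vec2NormSq (ζ e)) :
    vec2NormSq (infMulVec A ζ c) ≤ 2 * ((∑' e, frobSq (A c e)) * ∑' e, vec2NormSq (ζ e)) :=
  calc vec2NormSq (infMulVec A ζ c) = ∑ i, (∑' e, (A c e).mulVec (ζ e) i) ^ 2 := rfl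
    _ ≤ ∑ _i : Fin 2, (∑' e, frobSq (A c e)) * ∑' e, vec2NormSq (ζ e) :=
      Finset.sum_le_sum fun i _ => tsum_sq_le_tsum_mul_tsum (fun _ => frobSq_nonneg _)
        (fun _ => vec2NormSq_nonneg _) hA hζ fun _ => mulVec_apply_sq_le _ _ i
    _ = 2 * ((∑' e, frobSq (A c e)) * ∑' e, vec2NormSq (ζ e)) := by simp

lemma tsum_vec2NormSq_infMulVec_le {ι : Type*} {r : ι → L}
    (hrow : ∀ i, Summable fun e => frobSq (A (r i) e))
    (hR : Summable fun i => ∑' e, frobSq (A (r i) e)) (hζ : Summable fun e => vec2NormSq (ζ e)) :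
    ∑' i, vec2NormSq (infMulVec A ζ (r i)) ≤
      2 * (∑' i, ∑' e, frobSq (A (r i) e)) * ∑' e, vec2NormSq (ζ e) := by
  have hle := fun i => vec2NormSq_infMulVec_le (hrow i) hζ
  have hRζ : Summable fun i => 2 * ((∑' e, frobSq (A (r i) e)) * ∑' e, vec2NormSq (ζ e)) :=
    (hR.mul_right _).mul_left 2
  calc ∑' i, vec2NormSq (infMulVec A ζ (r i))
      ≤ ∑' i, 2 * ((∑' e, frobSq (A (r i) e)) * ∑' e, vec2NormSq (ζ e)) :=
        (hRζ.of_nonneg_of_le (fun _ => vec2NormSq_nonneg _) hle).tsum_le_tsum hle hRζ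
    _ = 2 * (∑' i, ∑' e, frobSq (A (r i) e)) * ∑' e, vec2NormSq (ζ e) := by
        rw [tsum_mul_left, tsum_mul_right, mul_assoc]

variable {w : L → ℕ} {β KA : ℝ}

lemma hsBlock_sq_le (hβ : 0 ≤ β) (hw : ∀ a, 1 ≤ w a) {a d : L}
    (hKA : (1 + |(w a : ℝ) - w d|) * (w a : ℝ) ^ β * (w d : ℝ) ^ β * hsBlock w A a d ≤ KA) :
    hsBlock w A a d ^ 2 ≤ (KA / (w a : ℝ) ^ β) ^ 2 * ((1 + |(w a : ℝ) - w d|) ^ 2)⁻¹ := by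
  set D := 1 + |(w a : ℝ) - w d|
  set P := (w a : ℝ) ^ β
  have hP : 0 < P := Real.rpow_pos_of_pos (by exact_mod_cast hw a) β
  have hQ : 1 ≤ (w d : ℝ) ^ β := Real.one_le_rpow (by exact_mod_cast hw d) hβ
  have hh : 0 ≤ hsBlock w A a d := Real.sqrt_nonneg _
  have hle : hsBlock w A a d ≤ KA / (D * P) := by
    rw [le_div_iff₀ (by positivity)]
    nlinarith [mul_le_mul_of_nonneg_left hQ (by positivity : 0 ≤ D * P * hsBlock w A a d)]
  calc hsBlock w A a d ^ 2 ≤ (KA / (D * P)) ^ 2 := pow_le_pow_left₀ hh hle 2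
    _ = (KA / P) ^ 2 * (D ^ 2)⁻¹ := by field_simp

lemma tsum_ofReal_frobSq_block {a d : L}
    (hA : Summable fun p : {c // w c = w a} × {e // w e = w d} => frobSq (A p.1.1 p.2.1)) :
    ∑' p : {c // w c = w a} × {e // w e = w d}, ENNReal.ofReal (frobSq (A p.1 p.2)) =
      ENNReal.ofReal (hsBlock w A a d ^ 2) := by
  rw [← ENNReal.ofReal_tsum_of_nonneg (fun _ => frobSq_nonneg _) hA, hsBlock,
    Real.sq_sqrt (tsum_nonneg fun _ => frobSq_nonneg _)]

lemma frobSq_rows_summable_and_tsum_le (hβ : 0 ≤ β) (hw : ∀ a, 1 ≤ w a)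
    (hA : ∀ a d : L, Summable fun p : {c // w c = w a} × {e // w e = w d} =>
      frobSq (A p.1.1 p.2.1))
    (hKA : ∀ a d : L,
      (1 + |(w a : ℝ) - w d|) * (w a : ℝ) ^ β * (w d : ℝ) ^ β * hsBlock w A a d ≤ KA)
    (a : L) :
    (∀ c : {c // w c = w a}, Summable fun e => frobSq (A c e)) ∧
      Summable (fun c : {c // w c = w a} => ∑' e, frobSq (A c e)) ∧
      ∑' (c : {c // w c = w a}) (e : L), frobSq (A c e) ≤
        (KA / (w a : ℝ) ^ β) ^ 2 * sumInvOneAddAbsSq := by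
  refine summable_and_tsum_tsum_le_of_tsum_tsum_ofReal_le (fun _ _ => frobSq_nonneg _)
    (mul_nonneg (sq_nonneg _) sumInvOneAddAbsSq_pos.le) ?_
  rw [ENNReal.ofReal_mul (sq_nonneg _)]
  refine tsum_tsum_le_of_block_le (F := fun c e => ENNReal.ofReal (frobSq (A c e))) w a
    fun d => ?_
  rw [tsum_ofReal_frobSq_block (hA a d), ← ENNReal.ofReal_mul (sq_nonneg _)]
  exact ENNReal.ofReal_le_ofReal (hsBlock_sq_le hβ hw (hKA a d))

lemma summable_vec2NormSq_and_tsum_le {s Ks : ℝ} (hs : 0 ≤ s) (hw : ∀ a, 1 ≤ w a)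
    (hζ : Summable fun b => vec2NormSq (ζ b) * (w b : ℝ) ^ (2 * s))
    (hKs : √(∑' b, vec2NormSq (ζ b) * (w b : ℝ) ^ (2 * s)) ≤ Ks) :
    Summable (fun b => vec2NormSq (ζ b)) ∧ ∑' b, vec2NormSq (ζ b) ≤ Ks ^ 2 := by
  have hle : ∀ b, vec2NormSq (ζ b) ≤ vec2NormSq (ζ b) * (w b : ℝ) ^ (2 * s) := fun b =>
    le_mul_of_one_le_right (vec2NormSq_nonneg _)
      (Real.one_le_rpow (by exact_mod_cast hw b) (by positivity))
  have hsum := hζ.of_nonneg_of_le (fun _ => vec2NormSq_nonneg _) hle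
  exact ⟨hsum, (hsum.tsum_le_tsum hle hζ).trans
    ((Real.sqrt_le_left ((Real.sqrt_nonneg _).trans hKs)).1 hKs)⟩

end InfiniteMatrix

lemma mul_sqrt_le_of_le_div_sq {P T K : ℝ} (hP : 0 < P) (hK : 0 ≤ K) (h : T ≤ (K / P) ^ 2) :
    P * √T ≤ K :=
  calc P * √T ≤ P * √((K / P) ^ 2) := by gcongr
    _ = K := by rw [Real.sqrt_sq (by positivity)]; field_simp

/-- Lemma 4.1(iii): for `β > 0` and `s ≥ 0` there is `C = C(β)` such that if
`|A|_{β+} ≤ KA` and `‖ζ‖_s ≤ Ks` then the sums defining `Aζ` converge absolutely and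
`|Aζ|_β ≤ C · KA · Ks`. -/
theorem stmt_16 (β : ℝ) (hβ : 0 < β) :
    ∃ C : ℝ, 0 < C ∧
      ∀ (s : ℝ), 0 ≤ s →
      ∀ (L : Type) (_ : Countable L) (w : L → ℕ), (∀ a, 1 ≤ w a) →
      ∀ (A : L → L → Matrix (Fin 2) (Fin 2) ℝ) (ζ : L → Fin 2 → ℝ) (KA Ks : ℝ),
        (∀ a b : L, Summable fun p : {c : L // w c = w a} × {d : L // w d = w b} =>
          frobSq (A p.1.1 p.2.1)) →
        (∀ a b : L, (1 + |(w a : ℝ) - (w b : ℝ)|) * (w a : ℝ) ^ β * (w b : ℝ) ^ β *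
          hsBlock w A a b ≤ KA) →
        (Summable fun b : L => vec2NormSq (ζ b) * (w b : ℝ) ^ (2 * s)) →
        Real.sqrt (∑' b : L, vec2NormSq (ζ b) * (w b : ℝ) ^ (2 * s)) ≤ Ks →
        (∀ c : L, ∀ i : Fin 2, Summable fun e : L => |(A c e).mulVec (ζ e) i|) ∧
        (∀ a : L,
          (w a : ℝ) ^ β *
              Real.sqrt (∑' b : {b : L // w b = w a}, vec2NormSq (infMulVec A ζ b.1)) ≤
            C * KA * Ks) := by
  refine ⟨√(2 * sumInvOneAddAbsSq), Real.sqrt_pos.2 (by linarith [sumInvOneAddAbsSq_pos]), ?_⟩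
  intro s hs L _ w hw A ζ KA Ks hA hKA hζ hKs
  obtain ⟨hζ0, hζ0_le⟩ := summable_vec2NormSq_and_tsum_le hs hw hζ hKs
  have hrows := frobSq_rows_summable_and_tsum_le hβ.le hw hA hKA
  refine ⟨fun c => summable_abs_mulVec_apply ((hrows c).1 ⟨c, rfl⟩) hζ0, fun a => ?_⟩
  obtain ⟨hrow, hR, hR_le⟩ := hrows a
  have hKA0 : 0 ≤ KA := le_trans (by unfold hsBlock; positivity) (hKA a a)
  have hKs0 : 0 ≤ Ks := (Real.sqrt_nonneg _).trans hKs
  refine mul_sqrt_le_of_le_div_sq (Real.rpow_pos_of_pos (by exact_mod_cast hw a) β)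
    (by positivity) ?_
  calc ∑' b : {b // w b = w a}, vec2NormSq (infMulVec A ζ b)
      ≤ 2 * (∑' (b : {b // w b = w a}) (e : L), frobSq (A b e)) * ∑' e, vec2NormSq (ζ e) :=
        tsum_vec2NormSq_infMulVec_le hrow hR hζ0
    _ ≤ 2 * ((KA / (w a : ℝ) ^ β) ^ 2 * sumInvOneAddAbsSq) * Ks ^ 2 := by
        refine mul_le_mul (by linarith) hζ0_le (tsum_nonneg fun _ => vec2NormSq_nonneg _) ?_
        exact mul_nonneg zero_le_two (mul_nonneg (sq_nonneg _) sumInvOneAddAbsSq_pos.le)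
    _ = (√(2 * sumInvOneAddAbsSq) * KA * Ks / (w a : ℝ) ^ β) ^ 2 := by
        rw [div_pow, div_pow, mul_pow, mul_pow, Real.sq_sqrt (by linarith [sumInvOneAddAbsSq_pos])]
        ring
end

section
/- Let E be a real (or complex) Banach space, let α ≥ 0 and 0 ≤ b ≤ 1/2, let a : [0,1] → E and B : [0,1] → L(E,E) be continuous with ‖a(t)‖ ≤ α and ‖B(t)‖ ≤ b for all t ∈ [0,1], and let ζ : [0,1] → E be continuously differentiable with ζ'(t) = a(t) + B(t)·ζ(t) for all t ∈ [0,1]. Then ‖ζ(t) − ζ(0)‖ ≤ 2·(α + b·‖ζ(0)‖) for all t ∈ [0,1]. -/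
/-- Neumann-series estimate for a non-autonomous affine linear ODE in a Banach space:
if `ζ' = a(t) + B(t) ζ` on `[0,1]` with `‖a(t)‖ ≤ α` and `‖B(t)‖ ≤ b ≤ 1/2`, then
`‖ζ(t) − ζ(0)‖ ≤ 2(α + b‖ζ(0)‖)` for all `t ∈ [0,1]`. -/
theorem stmt_19 (E : Type*) [NormedAddCommGroup E] [NormedSpace ℝ E] [CompleteSpace E]
    (α b : ℝ) (hα : 0 ≤ α) (hb0 : 0 ≤ b) (hb : b ≤ 1 / 2)
    (a : ℝ → E) (B : ℝ → E →L[ℝ] E) (ζ : ℝ → E)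
    (ha_cont : ContinuousOn a (Set.Icc 0 1))
    (hB_cont : ContinuousOn B (Set.Icc 0 1))
    (ha : ∀ t ∈ Set.Icc (0 : ℝ) 1, ‖a t‖ ≤ α)
    (hB : ∀ t ∈ Set.Icc (0 : ℝ) 1, ‖B t‖ ≤ b)
    (hζ : ∀ t ∈ Set.Icc (0 : ℝ) 1, HasDerivWithinAt ζ (a t + B t (ζ t)) (Set.Icc 0 1) t) :
    ∀ t ∈ Set.Icc (0 : ℝ) 1, ‖ζ t - ζ 0‖ ≤ 2 * (α + b * ‖ζ 0‖) := by
  have h0 : (0 : ℝ) ∈ Set.Icc (0 : ℝ) 1 := by norm_num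
  -- ζ is continuous on [0,1]
  have hζc : ContinuousOn ζ (Set.Icc 0 1) := fun t ht =>
    (hζ t ht).continuousWithinAt
  have hgc : ContinuousOn (fun t => ‖ζ t - ζ 0‖) (Set.Icc 0 1) :=
    (hζc.sub continuousOn_const).norm
  -- maximum of g on the compact interval
  obtain ⟨t₀, ht₀, hmax⟩ := isCompact_Icc.exists_isMaxOn (Set.nonempty_Icc.2 (by norm_num))
    hgc
  set M := ‖ζ t₀ - ζ 0‖ with hM
  have hM0 : 0 ≤ M := norm_nonneg _
  set C := α + b * (‖ζ 0‖ + M) with hC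
  -- derivative bound
  have hbound : ∀ t ∈ Set.Icc (0 : ℝ) 1, ‖a t + B t (ζ t)‖ ≤ C := by
    intro t ht
    have h1 : ‖B t (ζ t)‖ ≤ b * ‖ζ t‖ :=
      le_trans ((B t).le_opNorm (ζ t)) (by
        exact mul_le_mul_of_nonneg_right (hB t ht) (norm_nonneg _))
    have h2 : ‖ζ t‖ ≤ ‖ζ 0‖ + M := by
      have := hmax ht
      have h3 : ‖ζ t - ζ 0‖ ≤ M := this
      calc ‖ζ t‖ = ‖ζ 0 + (ζ t - ζ 0)‖ := by rw [add_sub_cancel]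
        _ ≤ ‖ζ 0‖ + ‖ζ t - ζ 0‖ := norm_add_le _ _
        _ ≤ ‖ζ 0‖ + M := by linarith
    calc ‖a t + B t (ζ t)‖ ≤ ‖a t‖ + ‖B t (ζ t)‖ := norm_add_le _ _
      _ ≤ α + b * ‖ζ t‖ := add_le_add (ha t ht) h1
      _ ≤ C := by rw [hC]; nlinarith
  have hC0 : 0 ≤ C := le_trans (norm_nonneg _) (hbound 0 h0)
  -- mean value inequality
  have key : ∀ t ∈ Set.Icc (0 : ℝ) 1, ‖ζ t - ζ 0‖ ≤ C := by
    intro t ht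
    have := (convex_Icc (0:ℝ) 1).norm_image_sub_le_of_norm_hasDerivWithin_le
      hζ hbound h0 ht
    have ht1 : ‖t - 0‖ ≤ 1 := by
      rw [sub_zero, Real.norm_eq_abs, abs_le]
      exact ⟨by linarith [ht.1], ht.2⟩
    calc ‖ζ t - ζ 0‖ ≤ C * ‖t - 0‖ := this
      _ ≤ C * 1 := mul_le_mul_of_nonneg_left ht1 hC0
      _ = C := mul_one C
  -- self-improving bound on M
  have hMC : M ≤ C := key t₀ ht₀
  have hMfin : M ≤ 2 * (α + b * ‖ζ 0‖) := by
    rw [hC] at hMC; nlinarith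
  intro t ht
  exact le_trans (hmax ht) hMfin
end
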